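/- arXiv:2405.19120 — 10 statements merged into one kernel-verified Lean document; each statement's English description precedes it below -/
import Mathlib

section
/- Let G be a compact topological group with Haar probability measure λ. For all Borel sets A, B ⊆ G, the function y ↦ λ(B ∩ (A · y)) from G to ℝ is continuous, where A · y = {a · y : a ∈ A}. -/
/-!
Right translation `x ↦ x * y⁻¹` carries `A * y` to a preimage of `A`, and these translations form
a continuous family of measure-preserving maps, because a Haar probability measure is unique and
hence also right invariant. Preimages of a fixed set under such a family vary continuously in
measure, and `|λ(B ∩ S) - λ(B ∩ T)| ≤ λ(S ∆ T)`.
-/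

open MeasureTheory Filter Set
open scoped symmDiff Topology

namespace MeasureTheory

theorem abs_measureReal_sub_le_measureReal_symmDiff_of_isFiniteMeasure {X : Type*}
    [MeasurableSpace X] (μ : Measure X) [IsFiniteMeasure μ] (s t : Set X) :
    |μ.real s - μ.real t| ≤ μ.real (s ∆ t) := by
  have le_add_symmDiff : ∀ s t : Set X, μ.real s ≤ μ.real t + μ.real (s ∆ t) := fun s t =>
    calc μ.real s ≤ μ.real (t ∪ s ∆ t) :=
          measureReal_mono (fun x hx => by by_cases hxt : x ∈ t <;> simp_all [mem_symmDiff])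
      _ ≤ μ.real t + μ.real (s ∆ t) := measureReal_union_le t (s ∆ t)
  have le_add_symmDiff' := le_add_symmDiff t s
  rw [symmDiff_comm] at le_add_symmDiff'
  exact abs_sub_le_iff.2 ⟨by linarith [le_add_symmDiff s t], by linarith⟩

theorem continuous_measureReal_inter_preimage {α X Y : Type*} [TopologicalSpace α]
    [TopologicalSpace X] [MeasurableSpace X] [BorelSpace X] [R1Space X]
    [TopologicalSpace Y] [MeasurableSpace Y] [BorelSpace Y] [R1Space Y]
    {μ : Measure X} {ν : Measure Y} [IsFiniteMeasure μ] [μ.InnerRegularCompactLTTop]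
    [IsLocallyFiniteMeasure ν] {f : α → C(X, Y)} (hf : Continuous f)
    (hfμ : ∀ a, MeasurePreserving (f a) μ ν) {s : Set Y} (hs : NullMeasurableSet s ν)
    (t : Set X) : Continuous fun a => μ.real (t ∩ f a ⁻¹' s) := by
  rw [continuous_iff_continuousAt]
  intro a
  have hνs : ν s ≠ ⊤ := by
    rw [← (hfμ a).measure_preimage hs]
    finiteness
  have hsymmDiff : Tendsto (fun b => μ.real ((f b ⁻¹' s) ∆ (f a ⁻¹' s))) (𝓝 a) (𝓝 0) := by
    have := (ENNReal.tendsto_toReal ENNReal.zero_ne_top).comp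
      (tendsto_measure_symmDiff_preimage_nhds_zero (hf.tendsto a) (.of_forall hfμ) (hfμ a) hs hνs)
    rwa [ENNReal.toReal_zero] at this
  refine tendsto_iff_dist_tendsto_zero.2 <|
    squeeze_zero (fun _ => dist_nonneg) (fun b => ?_) hsymmDiff
  calc dist (μ.real (t ∩ f b ⁻¹' s)) (μ.real (t ∩ f a ⁻¹' s))
      ≤ μ.real ((t ∩ f b ⁻¹' s) ∆ (t ∩ f a ⁻¹' s)) :=
        abs_measureReal_sub_le_measureReal_symmDiff_of_isFiniteMeasure μ _ _
    _ = μ.real (t ∩ (f b ⁻¹' s) ∆ (f a ⁻¹' s)) := by rw [inter_symmDiff_distrib_left]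
    _ ≤ μ.real ((f b ⁻¹' s) ∆ (f a ⁻¹' s)) := measureReal_mono inter_subset_right

theorem isMulRightInvariant_of_isProbabilityMeasure {G : Type*} [Group G] [TopologicalSpace G]
    [IsTopologicalGroup G] [LocallyCompactSpace G] [MeasurableSpace G] [BorelSpace G]
    (μ : Measure G) [μ.IsHaarMeasure] [IsProbabilityMeasure μ] : μ.IsMulRightInvariant where
  map_mul_right_eq_self g :=
    have : IsProbabilityMeasure (μ.map (· * g)) :=
      Measure.isProbabilityMeasure_map (measurable_mul_const g).aemeasurable
    Measure.isHaarMeasure_eq_of_isProbabilityMeasure _ μ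

end MeasureTheory

theorem stmt1_general {G : Type*} [Group G] [TopologicalSpace G] [IsTopologicalGroup G]
    [CompactSpace G] [MeasurableSpace G] [BorelSpace G]
    (μ : Measure G) [μ.IsHaarMeasure] [IsProbabilityMeasure μ]
    (A B : Set G) (hA : MeasurableSet A) :
    Continuous (fun y : G => (μ (B ∩ ((· * y) '' A))).toReal) := by
  have := isMulRightInvariant_of_isProbabilityMeasure μ
  let translate : C(G, C(G, G)) := ContinuousMap.curry ⟨fun p => p.2 * p.1⁻¹, by fun_prop⟩
  simp_rw [image_mul_right]
  exact continuous_measureReal_inter_preimage translate.continuous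
    (fun y => measurePreserving_mul_right μ y⁻¹) hA.nullMeasurableSet B

/-- For a compact group `G` with Haar probability measure `μ` and Borel sets `A, B ⊆ G`,
the map `y ↦ μ (B ∩ (A * y))` is continuous. -/
theorem stmt1 {G : Type*} [Group G] [TopologicalSpace G] [IsTopologicalGroup G]
    [CompactSpace G] [T2Space G] [MeasurableSpace G] [BorelSpace G]
    (μ : Measure G) [μ.IsHaarMeasure] [IsProbabilityMeasure μ]
    (A B : Set G) (hA : MeasurableSet A) (hB : MeasurableSet B) :
    Continuous (fun y : G => (μ (B ∩ ((· * y) '' A))).toReal) :=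
  stmt1_general μ A B hA
end

section
/- Let K and L be compact Hausdorff spaces, ρ : K → L a continuous surjection, and φ : L → P(K) a weak*-continuous map into regular Borel probability measures on K such that φ(y)(ρ⁻¹({y})) = 1 for every y ∈ L. Then the composition operator T : C(L) → C(K), T(g) = g ∘ ρ, is an isometric embedding whose range is a complemented subspace of C(K); indeed the operator S : C(K) → C(L) given by S(f)(y) = ∫_K f dφ(y) is bounded and satisfies S ∘ T = id on C(L). -/
open MeasureTheory BoundedContinuousFunction

/-- If `ρ : K → L` is a continuous surjection of compact Hausdorff spaces and
`φ : L → P(K)` is a weak*-continuous family of probability measures with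
`φ(y)(ρ⁻¹{y}) = 1` for all `y`, then `T : g ↦ g ∘ ρ` is an isometric embedding
of `C(L)` into `C(K)` and the averaging operator `S(f)(y) = ∫ f dφ(y)` is a bounded
left inverse of `T`; hence the range of `T` is complemented. -/
theorem stmt2 {K L : Type*}
    [TopologicalSpace K] [CompactSpace K] [T2Space K] [MeasurableSpace K] [BorelSpace K]
    [TopologicalSpace L] [CompactSpace L] [T2Space L]
    (ρ : C(K, L)) (hρ : Function.Surjective ρ)
    (φ : L → ProbabilityMeasure K) (hφ : Continuous φ)
    (hfib : ∀ y : L, (φ y : Measure K) ((⇑ρ) ⁻¹' {y}) = 1) :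
    ∃ S : C(K, ℝ) →L[ℝ] C(L, ℝ),
      (∀ (f : C(K, ℝ)) (y : L), S f y = ∫ x, f x ∂(φ y : Measure K)) ∧
      (∀ g : C(L, ℝ), S (g.comp ρ) = g) ∧
      (∀ g : C(L, ℝ), ‖g.comp ρ‖ = ‖g‖) := by
  have hcont : ∀ f : C(K, ℝ), Continuous (fun y : L => ∫ x, f x ∂(φ y : Measure K)) := by
    intro f
    rw [continuous_iff_continuousAt]
    intro y
    exact (ProbabilityMeasure.tendsto_iff_forall_integral_tendsto.mp
      (hφ.continuousAt (x := y))) (mkOfCompact f)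
  have hint : ∀ (f : C(K, ℝ)) (y : L), Integrable f (φ y : Measure K) := fun f y =>
    f.continuous.integrable_of_hasCompactSupport (HasCompactSupport.of_compactSpace f)
  set S₀ : C(K, ℝ) →ₗ[ℝ] C(L, ℝ) :=
    { toFun := fun f => ⟨fun y => ∫ x, f x ∂(φ y : Measure K), hcont f⟩
      map_add' := fun f g => by
        ext y
        exact integral_add (hint f y) (hint g y)
      map_smul' := fun c f => by
        ext y
        exact integral_smul c _ } with hS₀
  have hSbound : ∀ f : C(K, ℝ), ‖S₀ f‖ ≤ 1 * ‖f‖ := by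
    intro f
    rw [one_mul]
    apply ContinuousMap.norm_le _ (norm_nonneg f) |>.mpr
    intro y
    show ‖∫ x, f x ∂(φ y : Measure K)‖ ≤ ‖f‖
    have h := norm_integral_le_of_norm_le_const (μ := (φ y : Measure K)) (C := ‖f‖)
      (Filter.Eventually.of_forall fun x => f.norm_coe_le_norm x)
    simpa using h
  refine ⟨S₀.mkContinuous 1 hSbound, fun f y => rfl, ?_, ?_⟩
  · intro g
    ext y
    show ∫ x, g (ρ x) ∂(φ y : Measure K) = g y
    have hmeas : MeasurableSet ((⇑ρ) ⁻¹' {y}) :=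
      (isClosed_singleton.preimage ρ.continuous).measurableSet
    have hcompl : (φ y : Measure K) (((⇑ρ) ⁻¹' {y})ᶜ) = 0 := by
      have := measure_compl hmeas (measure_ne_top (φ y : Measure K) _)
      rw [hfib y] at this
      simp [this]
    have hae : (fun x => g (ρ x)) =ᵐ[(φ y : Measure K)] fun _ => g y := by
      filter_upwards [measure_eq_zero_iff_ae_notMem.mp hcompl] with x hx
      simp only [Set.mem_compl_iff, Set.mem_preimage, Set.mem_singleton_iff, not_not] at hx
      rw [hx]
    rw [integral_congr_ae hae, integral_const]
    simp
  · intro g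
    refine le_antisymm ?_ ?_
    · apply ContinuousMap.norm_le _ (norm_nonneg g) |>.mpr
      intro x
      exact g.norm_coe_le_norm (ρ x)
    · apply ContinuousMap.norm_le _ (norm_nonneg _) |>.mpr
      intro y
      obtain ⟨x, rfl⟩ := hρ y
      exact (g.comp ρ).norm_coe_le_norm x
end

section
/- Let K₁, K₂ be compact Hausdorff spaces and (ν_γ)_{γ∈Γ} a net of Borel probability measures on K₁ × K₂ all having the same marginal distributions (μ₁, μ₂). If for i = 1, 2 the family Σ_i ⊆ Bor(K_i) is Δ-dense in Bor(K_i) with respect to μ_i and the limit lim_γ ν_γ(E₁ × E₂) exists for all E₁ ∈ Σ₁, E₂ ∈ Σ₂, then lim_γ ν_γ(A₁ × A₂) exists for all Borel A₁ ⊆ K₁, A₂ ⊆ K₂. -/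
/-!
As all `ν γ` share the marginals,
`|ν γ (A₁ ×ˢ A₂) - ν γ (E₁ ×ˢ E₂)| ≤ μ₁ (A₁ ∆ E₁) + μ₂ (A₂ ∆ E₂)` uniformly in `γ`. By density, the net `γ ↦ ν γ (A₁ ×ˢ A₂)` is thus a uniform limit of convergent nets, hence Cauchy.
-/

open MeasureTheory Filter Topology

theorem exists_tendsto_of_forall_approx {α E : Type*} [PseudoMetricSpace E] [CompleteSpace E]
    {l : Filter α} {f : α → E}
    (h : ∀ ε > 0, ∃ g : α → E, (∃ c, Tendsto g l (𝓝 c)) ∧ ∀ a, dist (f a) (g a) ≤ ε) :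
    ∃ c, Tendsto f l (𝓝 c) := by
  rcases l.eq_or_neBot with rfl | hl
  · obtain ⟨-, ⟨c, -⟩, -⟩ := h 1 one_pos
    exact ⟨c, tendsto_bot⟩
  suffices Cauchy (map f l) from CompleteSpace.complete this
  refine Metric.cauchy_iff.2 ⟨map_neBot, fun ε hε => ?_⟩
  obtain ⟨g, ⟨c, hgc⟩, hfg⟩ := h (ε / 4) (by positivity)
  refine ⟨f '' {a | dist (g a) c < ε / 4},
    image_mem_map (hgc (Metric.ball_mem_nhds c (by positivity))), ?_⟩
  rintro _ ⟨a, ha, rfl⟩ _ ⟨b, hb, rfl⟩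
  have hb' : dist c (g b) < ε / 4 := by rw [dist_comm]; exact hb
  have hfb : dist (g b) (f b) ≤ ε / 4 := by rw [dist_comm]; exact hfg b
  linarith [dist_triangle4 (f a) (g a) c (f b), dist_triangle c (g b) (f b), hfg a, ha.out]

theorem symmDiff_prod_subset {α β : Type*} (A₁ E₁ : Set α) (A₂ E₂ : Set β) :
    symmDiff (A₁ ×ˢ A₂) (E₁ ×ˢ E₂) ⊆
      symmDiff A₁ E₁ ×ˢ (Set.univ : Set β) ∪ (Set.univ : Set α) ×ˢ symmDiff A₂ E₂ := by
  intro x hx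
  simp only [Set.mem_union, Set.mem_prod, Set.mem_univ, and_true, true_and,
    Set.mem_symmDiff] at hx ⊢
  tauto

theorem abs_measureReal_prod_sub_le {α β : Type*} [MeasurableSpace α] [MeasurableSpace β]
    (ν : Measure (α × β)) [IsFiniteMeasure ν] {A₁ E₁ : Set α} {A₂ E₂ : Set β}
    (hA₁ : MeasurableSet A₁) (hE₁ : MeasurableSet E₁)
    (hA₂ : MeasurableSet A₂) (hE₂ : MeasurableSet E₂) :
    |ν.real (A₁ ×ˢ A₂) - ν.real (E₁ ×ˢ E₂)| ≤
      ν.real (symmDiff A₁ E₁ ×ˢ Set.univ) + ν.real (Set.univ ×ˢ symmDiff A₂ E₂) :=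
  calc |ν.real (A₁ ×ˢ A₂) - ν.real (E₁ ×ˢ E₂)|
      ≤ ν.real (symmDiff (A₁ ×ˢ A₂) (E₁ ×ˢ E₂)) :=
        abs_measureReal_sub_le_measureReal_symmDiff (hA₁.prod hA₂).nullMeasurableSet
          (hE₁.prod hE₂).nullMeasurableSet
    _ ≤ ν.real (symmDiff A₁ E₁ ×ˢ Set.univ ∪ Set.univ ×ˢ symmDiff A₂ E₂) :=
        measureReal_mono (symmDiff_prod_subset A₁ E₁ A₂ E₂)
    _ ≤ _ := measureReal_union_le _ _

theorem stmt4_general {K₁ K₂ : Type*}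
    [MeasurableSpace K₁] [MeasurableSpace K₂]
    {Γ : Type*} [Preorder Γ]
    (ν : Γ → Measure (K₁ × K₂)) (hprob : ∀ γ, IsProbabilityMeasure (ν γ))
    (μ₁ : Measure K₁) (μ₂ : Measure K₂)
    (hm₁ : ∀ γ, ∀ A : Set K₁, MeasurableSet A → ν γ (A ×ˢ Set.univ) = μ₁ A)
    (hm₂ : ∀ γ, ∀ B : Set K₂, MeasurableSet B → ν γ (Set.univ ×ˢ B) = μ₂ B)
    (S₁ : Set (Set K₁)) (S₂ : Set (Set K₂))
    (hS₁ : ∀ E ∈ S₁, MeasurableSet E) (hS₂ : ∀ E ∈ S₂, MeasurableSet E)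
    (hd₁ : ∀ A : Set K₁, MeasurableSet A → ∀ ε : ENNReal, 0 < ε →
      ∃ E ∈ S₁, μ₁ (symmDiff A E) < ε)
    (hd₂ : ∀ B : Set K₂, MeasurableSet B → ∀ ε : ENNReal, 0 < ε →
      ∃ E ∈ S₂, μ₂ (symmDiff B E) < ε)
    (hlim : ∀ E₁ ∈ S₁, ∀ E₂ ∈ S₂,
      ∃ l : ℝ, Tendsto (fun γ => (ν γ (E₁ ×ˢ E₂)).toReal) atTop (nhds l)) :
    ∀ A₁ : Set K₁, MeasurableSet A₁ → ∀ A₂ : Set K₂, MeasurableSet A₂ →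
      ∃ l : ℝ, Tendsto (fun γ => (ν γ (A₁ ×ˢ A₂)).toReal) atTop (nhds l) := by
  intro A₁ hA₁ A₂ hA₂
  refine exists_tendsto_of_forall_approx fun ε hε => ?_
  have hε₂ : 0 < ENNReal.ofReal (ε / 2) := ENNReal.ofReal_pos.2 (by positivity)
  obtain ⟨E₁, hE₁, hμE₁⟩ := hd₁ A₁ hA₁ _ hε₂
  obtain ⟨E₂, hE₂, hμE₂⟩ := hd₂ A₂ hA₂ _ hε₂
  refine ⟨fun γ => (ν γ (E₁ ×ˢ E₂)).toReal, hlim E₁ hE₁ E₂ hE₂, fun γ => ?_⟩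
  have hν := abs_measureReal_prod_sub_le (ν γ) hA₁ (hS₁ E₁ hE₁) hA₂ (hS₂ E₂ hE₂)
  simp only [measureReal_def, hm₁ γ _ (hA₁.symmDiff (hS₁ E₁ hE₁)),
    hm₂ γ _ (hA₂.symmDiff (hS₂ E₂ hE₂))] at hν
  rw [Real.dist_eq]
  linarith [ENNReal.toReal_lt_of_lt_ofReal hμE₁, ENNReal.toReal_lt_of_lt_ofReal hμE₂]

/-- Lemma on nets of measures on a product with fixed marginals: if `Σᵢ` is
`Δ`-dense in `Bor(Kᵢ)` w.r.t. `μᵢ` and `lim_γ ν_γ(E₁ × E₂)` exists for all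
`E₁ ∈ Σ₁`, `E₂ ∈ Σ₂`, then `lim_γ ν_γ(A₁ × A₂)` exists for all Borel `A₁, A₂`. -/
theorem stmt4 {K₁ K₂ : Type*}
    [TopologicalSpace K₁] [CompactSpace K₁] [T2Space K₁] [MeasurableSpace K₁] [BorelSpace K₁]
    [TopologicalSpace K₂] [CompactSpace K₂] [T2Space K₂] [MeasurableSpace K₂] [BorelSpace K₂]
    {Γ : Type*} [Preorder Γ] [Nonempty Γ] [IsDirected Γ (· ≤ ·)]
    (ν : Γ → Measure (K₁ × K₂)) (hprob : ∀ γ, IsProbabilityMeasure (ν γ))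
    (μ₁ : Measure K₁) (μ₂ : Measure K₂)
    (hm₁ : ∀ γ, ∀ A : Set K₁, MeasurableSet A → ν γ (A ×ˢ Set.univ) = μ₁ A)
    (hm₂ : ∀ γ, ∀ B : Set K₂, MeasurableSet B → ν γ (Set.univ ×ˢ B) = μ₂ B)
    (S₁ : Set (Set K₁)) (S₂ : Set (Set K₂))
    (hS₁ : ∀ E ∈ S₁, MeasurableSet E) (hS₂ : ∀ E ∈ S₂, MeasurableSet E)
    (hd₁ : ∀ A : Set K₁, MeasurableSet A → ∀ ε : ENNReal, 0 < ε →
      ∃ E ∈ S₁, μ₁ (symmDiff A E) < ε)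
    (hd₂ : ∀ B : Set K₂, MeasurableSet B → ∀ ε : ENNReal, 0 < ε →
      ∃ E ∈ S₂, μ₂ (symmDiff B E) < ε)
    (hlim : ∀ E₁ ∈ S₁, ∀ E₂ ∈ S₂,
      ∃ l : ℝ, Tendsto (fun γ => (ν γ (E₁ ×ˢ E₂)).toReal) atTop (nhds l)) :
    ∀ A₁ : Set K₁, MeasurableSet A₁ → ∀ A₂ : Set K₂, MeasurableSet A₂ →
      ∃ l : ℝ, Tendsto (fun γ => (ν γ (A₁ ×ˢ A₂)).toReal) atTop (nhds l) :=
  stmt4_general ν hprob μ₁ μ₂ hm₁ hm₂ S₁ S₂ hS₁ hS₂ hd₁ hd₂ hlim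
end

section
/- Let K₁, K₂ be compact Hausdorff spaces, ν a regular Borel probability measure on K₁ × K₂, and (ν_γ) a net of regular Borel probability measures on K₁ × K₂ all having the same marginal distributions (μ₁, μ₂) as ν. If ν_γ converges to ν in the weak* topology, then lim_γ ν_γ(A₁ × A₂) = ν(A₁ × A₂) for all Borel A₁ ⊆ K₁ and A₂ ⊆ K₂. -/
/-!
Approximate each `Aᵢ` from inside by a compact `Lᵢ` and from outside by an open `Uᵢ` with
`μᵢ (Uᵢ \ Lᵢ)` small, and squeeze a continuous `F` between the indicators of `L₁ ×ˢ L₂` and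
`U₁ ×ˢ U₂`. Since `U₁ ×ˢ U₂ \ L₁ ×ˢ L₂` is covered by the cylinders `(U₁ \ L₁) ×ˢ univ` and
`univ ×ˢ (U₂ \ L₂)`, every measure `τ` with marginals `μ₁, μ₂` has `τ (A₁ ×ˢ A₂)` within
`μ₁ (U₁ \ L₁) + μ₂ (U₂ \ L₂)` of `∫ F ∂τ`, uniformly in `τ`; and `∫ F ∂ν γ → ∫ F ∂νlim`.
-/

open MeasureTheory Filter Set

theorem Metric.tendsto_of_forall_exists_dist_lt {α β : Type*} [PseudoMetricSpace β]
    {l : Filter α} {u : α → β} {x : β}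
    (h : ∀ ε > 0, ∃ v : α → β, ∃ y, Tendsto v l (nhds y) ∧ (∀ a, dist (u a) (v a) < ε) ∧
      dist x y < ε) :
    Tendsto u l (nhds x) := by
  refine Metric.tendsto_nhds.2 fun ε hε => ?_
  obtain ⟨v, y, hv, huv, hxy⟩ := h (ε / 3) (by positivity)
  filter_upwards [Metric.tendsto_nhds.1 hv (ε / 3) (by positivity)] with a hvy
  calc dist (u a) x ≤ dist (u a) (v a) + dist (v a) y + dist y x := dist_triangle4 _ _ _ _
    _ < ε / 3 + ε / 3 + ε / 3 := add_lt_add (add_lt_add (huv a) hvy) (dist_comm x y ▸ hxy)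
    _ = ε := by ring

theorem MeasurableSet.exists_isCompact_subset_isOpen_measure_sdiff_lt {X : Type*}
    [TopologicalSpace X] [T2Space X] [MeasurableSpace X] [OpensMeasurableSpace X]
    {μ : Measure X} [μ.OuterRegular] [μ.InnerRegularCompactLTTop]
    {A : Set X} (hA : MeasurableSet A) (hμA : μ A ≠ ⊤) {ε : ENNReal} (hε : ε ≠ 0) :
    ∃ K U, K ⊆ A ∧ A ⊆ U ∧ IsCompact K ∧ IsOpen U ∧ μ (U \ K) < ε := by
  have hε2 : ε / 2 ≠ 0 := ENNReal.div_ne_zero.2 ⟨hε, ENNReal.ofNat_ne_top⟩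
  obtain ⟨K, hKA, hK, hAK⟩ := hA.exists_isCompact_sdiff_lt hμA hε2
  obtain ⟨U, hAU, hU, -, hUA⟩ := hA.exists_isOpen_sdiff_lt hμA hε2
  refine ⟨K, U, hKA, hAU, hK, hU, ?_⟩
  calc μ (U \ K) ≤ μ (U \ A) + μ (A \ K) :=
        (measure_mono (sdiff_triangle U A K)).trans (measure_union_le _ _)
    _ < ε / 2 + ε / 2 := ENNReal.add_lt_add hUA hAK
    _ = ε := ENNReal.add_halves ε

theorem exists_continuousMap_indicator_le_le_indicator {X : Type*} [TopologicalSpace X]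
    [NormalSpace X] {K U : Set X} (hK : IsClosed K) (hU : IsOpen U) (hKU : K ⊆ U) :
    ∃ f : C(X, ℝ), K.indicator 1 ≤ ⇑f ∧ ⇑f ≤ U.indicator 1 := by
  obtain ⟨f, hfU, hfK, hf01⟩ := exists_continuous_zero_one_of_isClosed hU.isClosed_compl hK
    (disjoint_compl_left.mono_right hKU)
  refine ⟨f, fun x => ?_, fun x => ?_⟩
  · by_cases hx : x ∈ K
    · simp [hx, hfK hx]
    · simpa [hx] using (hf01 x).1
  · by_cases hx : x ∈ U
    · simpa [hx] using (hf01 x).2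
    · simp [hx, hfU (mem_compl hx)]

theorem Set.nonneg_of_indicator_one_le {α : Type*} {s : Set α} {f : α → ℝ}
    (h : s.indicator 1 ≤ f) : 0 ≤ f :=
  fun x => (indicator_nonneg (fun _ _ => zero_le_one) x).trans (h x)

theorem Set.indicator_prod_one_le_mul {α β : Type*} {s : Set α} {t : Set β} {f : α → ℝ}
    {g : β → ℝ} (hf : s.indicator 1 ≤ f) (hg : t.indicator 1 ≤ g) (z : α × β) :
    (s ×ˢ t).indicator 1 z ≤ f z.1 * g z.2 := by
  rw [← Prod.eta z, indicator_prod_one]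
  exact mul_le_mul (hf _) (hg _) (indicator_nonneg (fun _ _ => zero_le_one) _)
    (nonneg_of_indicator_one_le hf _)

theorem Set.mul_le_indicator_prod_one {α β : Type*} {s : Set α} {t : Set β} {f : α → ℝ}
    {g : β → ℝ} (hf₀ : 0 ≤ f) (hg₀ : 0 ≤ g) (hf : f ≤ s.indicator 1) (hg : g ≤ t.indicator 1)
    (z : α × β) : f z.1 * g z.2 ≤ (s ×ˢ t).indicator 1 z := by
  rw [← Prod.eta z, indicator_prod_one]
  exact mul_le_mul (hf _) (hg _) (hg₀ _) ((hf₀ _).trans (hf _))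

/-- Without second countability the product σ-algebra on `X × Y` can be strictly smaller than
the Borel one, so a continuous function on `X × Y` need not be measurable; hence `F` is taken of
the form `f z.1 * g z.2`. -/
theorem exists_continuousMap_prod_indicator_le_le_indicator {X Y : Type*}
    [TopologicalSpace X] [NormalSpace X] [MeasurableSpace X] [OpensMeasurableSpace X]
    [TopologicalSpace Y] [NormalSpace Y] [MeasurableSpace Y] [OpensMeasurableSpace Y]
    {K₁ U₁ : Set X} {K₂ U₂ : Set Y} (hK₁ : IsClosed K₁) (hU₁ : IsOpen U₁) (hKU₁ : K₁ ⊆ U₁)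
    (hK₂ : IsClosed K₂) (hU₂ : IsOpen U₂) (hKU₂ : K₂ ⊆ U₂) :
    ∃ F : C(X × Y, ℝ), Measurable F ∧
      (K₁ ×ˢ K₂).indicator 1 ≤ ⇑F ∧ ⇑F ≤ (U₁ ×ˢ U₂).indicator 1 := by
  obtain ⟨f, hfK, hfU⟩ := exists_continuousMap_indicator_le_le_indicator hK₁ hU₁ hKU₁
  obtain ⟨g, hgK, hgU⟩ := exists_continuousMap_indicator_le_le_indicator hK₂ hU₂ hKU₂
  refine ⟨f.comp .fst * g.comp .snd,
    (f.continuous.measurable.comp measurable_fst).mul (g.continuous.measurable.comp measurable_snd),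
    indicator_prod_one_le_mul hfK hgK,
    mul_le_indicator_prod_one (nonneg_of_indicator_one_le hfK) (nonneg_of_indicator_one_le hgK)
      hfU hgU⟩

theorem abs_integral_sub_measureReal_le_of_indicator_le_le_indicator {X : Type*}
    [MeasurableSpace X] {τ : Measure X} [IsFiniteMeasure τ] {f : X → ℝ}
    (hf : AEStronglyMeasurable f τ) {K S U : Set X} (hK : MeasurableSet K) (hU : MeasurableSet U)
    (hKS : K ⊆ S) (hSU : S ⊆ U) (hfK : K.indicator 1 ≤ f) (hfU : f ≤ U.indicator 1) :
    |∫ x, f x ∂τ - τ.real S| ≤ τ.real (U \ K) := by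
  have hf₀ : 0 ≤ f := nonneg_of_indicator_one_le hfK
  have hf₁ : f ≤ 1 := hfU.trans (indicator_le_self' fun _ _ => zero_le_one)
  have hfi : Integrable f τ :=
    (integrable_const 1).mono' hf (ae_of_all _ fun x => by
      rw [Real.norm_of_nonneg (hf₀ x)]; exact hf₁ x)
  have hlow : τ.real K ≤ ∫ x, f x ∂τ := by
    rw [← integral_indicator_one hK]
    exact integral_mono ((integrable_const 1).indicator hK) hfi hfK
  have hup : ∫ x, f x ∂τ ≤ τ.real U := by
    rw [← integral_indicator_one hU]
    exact integral_mono hfi ((integrable_const 1).indicator hU) hfU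
  have hτKS := measureReal_mono (μ := τ) hKS
  have hτSU := measureReal_mono (μ := τ) hSU
  rw [measureReal_sdiff (hKS.trans hSU) hK, abs_le]
  constructor <;> linarith

theorem measure_prod_sdiff_prod_le_of_marginals {α β : Type*} [MeasurableSpace α]
    [MeasurableSpace β] {τ : Measure (α × β)} {μ₁ : Measure α} {μ₂ : Measure β}
    (h₁ : ∀ A : Set α, MeasurableSet A → τ (A ×ˢ univ) = μ₁ A)
    (h₂ : ∀ B : Set β, MeasurableSet B → τ (univ ×ˢ B) = μ₂ B)
    {K₁ U₁ : Set α} {K₂ U₂ : Set β} (hK₁ : MeasurableSet K₁) (hU₁ : MeasurableSet U₁)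
    (hK₂ : MeasurableSet K₂) (hU₂ : MeasurableSet U₂) :
    τ (U₁ ×ˢ U₂ \ K₁ ×ˢ K₂) ≤ μ₁ (U₁ \ K₁) + μ₂ (U₂ \ K₂) :=
  calc τ (U₁ ×ˢ U₂ \ K₁ ×ˢ K₂) ≤ τ ((U₁ \ K₁) ×ˢ univ ∪ univ ×ˢ (U₂ \ K₂)) := by
        rw [prod_sdiff_prod, union_comm]
        gcongr <;> exact subset_univ _
    _ ≤ τ ((U₁ \ K₁) ×ˢ univ) + τ (univ ×ˢ (U₂ \ K₂)) := measure_union_le _ _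
    _ = μ₁ (U₁ \ K₁) + μ₂ (U₂ \ K₂) := by rw [h₁ _ (hU₁.diff hK₁), h₂ _ (hU₂.diff hK₂)]

theorem stmt6_general {K₁ K₂ : Type*}
    [TopologicalSpace K₁] [CompactSpace K₁] [T2Space K₁] [MeasurableSpace K₁] [BorelSpace K₁]
    [TopologicalSpace K₂] [CompactSpace K₂] [T2Space K₂] [MeasurableSpace K₂] [BorelSpace K₂]
    {Γ : Type*} [Preorder Γ]
    (ν : Γ → Measure (K₁ × K₂)) (νlim : Measure (K₁ × K₂))
    (hprob : ∀ γ, IsProbabilityMeasure (ν γ))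
    (hproblim : IsProbabilityMeasure νlim)
    (μ₁ : Measure K₁) (μ₂ : Measure K₂) [μ₁.Regular] [μ₂.Regular]
    (hm₁ : ∀ γ, ∀ A : Set K₁, MeasurableSet A → ν γ (A ×ˢ Set.univ) = μ₁ A)
    (hm₂ : ∀ γ, ∀ B : Set K₂, MeasurableSet B → ν γ (Set.univ ×ˢ B) = μ₂ B)
    (hmlim₁ : ∀ A : Set K₁, MeasurableSet A → νlim (A ×ˢ Set.univ) = μ₁ A)
    (hmlim₂ : ∀ B : Set K₂, MeasurableSet B → νlim (Set.univ ×ˢ B) = μ₂ B)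
    (hweak : ∀ f : C(K₁ × K₂, ℝ),
      Tendsto (fun γ => ∫ z, f z ∂(ν γ)) atTop (nhds (∫ z, f z ∂νlim))) :
    ∀ A₁ : Set K₁, MeasurableSet A₁ → ∀ A₂ : Set K₂, MeasurableSet A₂ →
      Tendsto (fun γ => (ν γ (A₁ ×ˢ A₂)).toReal) atTop
        (nhds ((νlim (A₁ ×ˢ A₂)).toReal)) := by
  intro A₁ hA₁ A₂ hA₂
  refine Metric.tendsto_of_forall_exists_dist_lt fun ε hε => ?_
  set η := ENNReal.ofReal ε
  have hη : η / 2 ≠ 0 := ENNReal.div_ne_zero.2 ⟨(ENNReal.ofReal_pos.2 hε).ne', by simp⟩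
  obtain ⟨L₁, U₁, hLA₁, hAU₁, hL₁, hU₁, hμ₁⟩ :=
    hA₁.exists_isCompact_subset_isOpen_measure_sdiff_lt (measure_ne_top μ₁ A₁) hη
  obtain ⟨L₂, U₂, hLA₂, hAU₂, hL₂, hU₂, hμ₂⟩ :=
    hA₂.exists_isCompact_subset_isOpen_measure_sdiff_lt (measure_ne_top μ₂ A₂) hη
  obtain ⟨F, hF, hFL, hFU⟩ := exists_continuousMap_prod_indicator_le_le_indicator
    hL₁.isClosed hU₁ (hLA₁.trans hAU₁) hL₂.isClosed hU₂ (hLA₂.trans hAU₂)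
  have hclose (τ : Measure (K₁ × K₂)) [IsFiniteMeasure τ]
      (h₁ : ∀ A : Set K₁, MeasurableSet A → τ (A ×ˢ univ) = μ₁ A)
      (h₂ : ∀ B : Set K₂, MeasurableSet B → τ (univ ×ˢ B) = μ₂ B) :
      dist (τ.real (A₁ ×ˢ A₂)) (∫ z, F z ∂τ) < ε := by
    have hsmall : τ (U₁ ×ˢ U₂ \ L₁ ×ˢ L₂) < η :=
      (measure_prod_sdiff_prod_le_of_marginals h₁ h₂ hL₁.measurableSet hU₁.measurableSet
        hL₂.measurableSet hU₂.measurableSet).trans_lt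
        ((ENNReal.add_lt_add hμ₁ hμ₂).trans_eq (ENNReal.add_halves η))
    rw [Real.dist_eq, abs_sub_comm]
    exact (abs_integral_sub_measureReal_le_of_indicator_le_le_indicator hF.aestronglyMeasurable
      (hL₁.measurableSet.prod hL₂.measurableSet) (hU₁.measurableSet.prod hU₂.measurableSet)
      (prod_mono hLA₁ hLA₂) (prod_mono hAU₁ hAU₂) hFL hFU).trans_lt
      (ENNReal.toReal_lt_of_lt_ofReal hsmall)
  exact ⟨_, _, hweak F, fun γ => hclose (ν γ) (hm₁ γ) (hm₂ γ), hclose νlim hmlim₁ hmlim₂⟩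

/-- If a net of regular Borel probability measures on `K₁ × K₂`, all with the same
(regular) marginals as `ν`, converges to `ν` weak*, then the measures of all Borel
rectangles converge: `ν_γ(A₁ × A₂) → ν(A₁ × A₂)`. -/
theorem stmt6 {K₁ K₂ : Type*}
    [TopologicalSpace K₁] [CompactSpace K₁] [T2Space K₁] [MeasurableSpace K₁] [BorelSpace K₁]
    [TopologicalSpace K₂] [CompactSpace K₂] [T2Space K₂] [MeasurableSpace K₂] [BorelSpace K₂]
    {Γ : Type*} [Preorder Γ] [Nonempty Γ] [IsDirected Γ (· ≤ ·)]
    (ν : Γ → Measure (K₁ × K₂)) (νlim : Measure (K₁ × K₂))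
    (hprob : ∀ γ, IsProbabilityMeasure (ν γ)) (hreg : ∀ γ, (ν γ).Regular)
    (hproblim : IsProbabilityMeasure νlim) (hreglim : νlim.Regular)
    (μ₁ : Measure K₁) (μ₂ : Measure K₂) [μ₁.Regular] [μ₂.Regular]
    (hm₁ : ∀ γ, ∀ A : Set K₁, MeasurableSet A → ν γ (A ×ˢ Set.univ) = μ₁ A)
    (hm₂ : ∀ γ, ∀ B : Set K₂, MeasurableSet B → ν γ (Set.univ ×ˢ B) = μ₂ B)
    (hmlim₁ : ∀ A : Set K₁, MeasurableSet A → νlim (A ×ˢ Set.univ) = μ₁ A)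
    (hmlim₂ : ∀ B : Set K₂, MeasurableSet B → νlim (Set.univ ×ˢ B) = μ₂ B)
    (hweak : ∀ f : C(K₁ × K₂, ℝ),
      Tendsto (fun γ => ∫ z, f z ∂(ν γ)) atTop (nhds (∫ z, f z ∂νlim))) :
    ∀ A₁ : Set K₁, MeasurableSet A₁ → ∀ A₂ : Set K₂, MeasurableSet A₂ →
      Tendsto (fun γ => (ν γ (A₁ ×ˢ A₂)).toReal) atTop
        (nhds ((νlim (A₁ ×ˢ A₂)).toReal)) :=
  stmt6_general ν νlim hprob hproblim μ₁ μ₂ hm₁ hm₂ hmlim₁ hmlim₂ hweak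
end

section
/- Let G be a compact topological group with Haar probability measure λ. For y ∈ G let ν_y be the pushforward of λ under x ↦ (x, x·y), and for a finite Borel partition ℰ of G let ν_{y,ℰ}(D) = Σ_{E ∈ ℰ, λ(E)>0} (λ⊗λ)(D ∩ (E × (E·y)))/λ(E). Then the net (ν_{y,ℰ})_ℰ, indexed by finite Borel partitions ordered by refinement, converges to ν_y in the weak* topology on probability measures on G × G. -/
/-
Fix a continuous `f` on `G × G` and put `h (x, x') = f (x, x' * y)`. By the right invariance of
the Haar measure, the `E`-summand of `ν_{y,P}` integrates `f` to `λ(E)⁻¹ ∫_{E × E} h`, while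
`ν_y` integrates `f` over `E` to `∫_E h (x, x)`. On a compact group `h` is uniformly continuous,
so once the parts `E` are small enough (a property inherited by refinements) `h (x, x')` is
`ε`-close to `h (x, x)` on `E × E`, and the two integrals differ by at most `ε λ(E)`; summing over
the parts gives an error of at most `ε`.
-/

open MeasureTheory Filter Classical

/-- A finite Borel partition of a topological measurable space `G`. -/
structure BorelPartition (G : Type*) [TopologicalSpace G] [MeasurableSpace G] where
  parts : Finset (Set G)
  meas : ∀ E ∈ parts, MeasurableSet E
  disj : (parts : Set (Set G)).PairwiseDisjoint id
  cover : ⋃₀ (parts : Set (Set G)) = Set.univ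

/-- Finite Borel partitions ordered by refinement: `P ≤ Q` iff `Q` refines `P`. -/
instance {G : Type*} [TopologicalSpace G] [MeasurableSpace G] :
    Preorder (BorelPartition G) where
  le P Q := ∀ F ∈ Q.parts, ∃ E ∈ P.parts, F ⊆ E
  le_refl P := fun F hF => ⟨F, hF, subset_rfl⟩
  le_trans P Q R hPQ hQR := fun F hF => by
    obtain ⟨E, hE, hFE⟩ := hQR F hF
    obtain ⟨D, hD, hED⟩ := hPQ E hE
    exact ⟨D, hD, hFE.trans hED⟩

/-- The measure `ν_{y,P}` on `G × G` associated to `y ∈ G` and a finite Borel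
partition `P`. -/
noncomputable def partMeasure {G : Type*} [Group G] [TopologicalSpace G]
    [MeasurableSpace G] (lam : Measure G) (y : G) (P : BorelPartition G) :
    Measure (G × G) :=
  ∑ E ∈ P.parts.filter (fun E => lam E ≠ 0),
    (lam E)⁻¹ • ((lam.prod lam).restrict (E ×ˢ ((· * y) '' E)))


open Set Topology

section ProductMeasurability

variable {X Y : Type*} [TopologicalSpace X] [TopologicalSpace Y] [CompactSpace X]
  [CompactSpace Y] [T2Space X] [T2Space Y] [MeasurableSpace X] [MeasurableSpace Y]
  [OpensMeasurableSpace X] [OpensMeasurableSpace Y]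

/- The σ-algebra on `X × Y` is the product one, which may be strictly smaller than the Borel one
when the factors are not second countable. Continuous functions are still measurable for it by
Stone–Weierstrass, since measurable functions are closed under uniform limits. -/
lemma ContinuousMap.measurable_prod (f : C(X × Y, ℝ)) : Measurable f := by
  let A : Subalgebra ℝ C(X × Y, ℝ) :=
    { carrier := {g | Measurable g}
      mul_mem' := fun hf hg => hf.mul hg
      add_mem' := fun hf hg => hf.add hg
      algebraMap_mem' := fun _ => measurable_const }
  have hclosed : IsClosed (A : Set C(X × Y, ℝ)) :=
    IsSeqClosed.isClosed fun u g hu hlim => measurable_of_tendsto_metrizable hu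
      (tendsto_pi_nhds.2 fun z => ((continuous_eval_const z).tendsto g).comp hlim)
  have hsep : A.SeparatesPoints := by
    rintro p q hpq
    rcases not_and_or.1 fun h => hpq (Prod.ext h.1 h.2) with h1 | h2
    · obtain ⟨g, hg, hgpq⟩ := separatesPoints_continuous_of_t35Space h1
      exact ⟨_, ⟨⟨fun z => g z.1, hg.comp continuous_fst⟩, hg.measurable.comp measurable_fst, rfl⟩,
        hgpq⟩
    · obtain ⟨g, hg, hgpq⟩ := separatesPoints_continuous_of_t35Space h2
      exact ⟨_, ⟨⟨fun z => g z.2, hg.comp continuous_snd⟩, hg.measurable.comp measurable_snd, rfl⟩,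
        hgpq⟩
  have hA : A = ⊤ := by
    rw [← ContinuousMap.subalgebra_topologicalClosure_eq_top_of_separatesPoints A hsep]
    exact SetLike.coe_injective (by rw [Subalgebra.topologicalClosure_coe, hclosed.closure_eq])
  exact (hA ▸ Algebra.mem_top : f ∈ A)

lemma ContinuousMap.integrable_prod (f : C(X × Y, ℝ)) (μ : Measure (X × Y)) [IsFiniteMeasure μ] :
    Integrable f μ :=
  .of_bound f.measurable_prod.aestronglyMeasurable ‖f‖ (.of_forall f.norm_coe_le_norm)

end ProductMeasurability

lemma dist_inv_mul_setIntegral_prod_setIntegral_diag_le {X : Type*} [MeasurableSpace X]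
    (μ : Measure X) [IsFiniteMeasure μ] (E : Set X) {h : X × X → ℝ}
    (hh : Integrable h (μ.prod μ)) (hdiag : Integrable (fun x => h (x, x)) μ) {δ : ℝ}
    (hδ : ∀ x ∈ E, ∀ x' ∈ E, dist (h (x, x')) (h (x, x)) ≤ δ) :
    dist ((μ.real E)⁻¹ * ∫ p in E ×ˢ E, h p ∂μ.prod μ) (∫ x in E, h (x, x) ∂μ)
      ≤ δ * μ.real E := by
  rcases eq_or_ne (μ E) 0 with hE | hE
  · simp [Measure.real, hE, setIntegral_measure_zero]
  have hpos : 0 < μ.real E := ENNReal.toReal_pos hE (measure_ne_top μ E)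
  have hdiag_prod : ∫ p in E ×ˢ E, h (p.1, p.1) ∂μ.prod μ = μ.real E * ∫ x in E, h (x, x) ∂μ := by
    simpa [mul_comm] using
      setIntegral_prod_mul (μ := μ) (ν := μ) (fun x => h (x, x)) (fun _ => (1 : ℝ)) E E
  have hbound : ‖∫ p in E ×ˢ E, (h p - h (p.1, p.1)) ∂μ.prod μ‖ ≤ δ * μ.real E ^ 2 := by
    refine (norm_setIntegral_le_of_norm_le_const (C := δ) (measure_lt_top _ _)
      fun p hp => ?_).trans_eq ?_
    · rw [← dist_eq_norm]
      exact hδ p.1 hp.1 p.2 hp.2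
    · rw [measureReal_prod_prod]
      ring
  rw [integral_sub hh.integrableOn (hdiag.comp_fst μ).integrableOn, hdiag_prod] at hbound
  calc dist ((μ.real E)⁻¹ * ∫ p in E ×ˢ E, h p ∂μ.prod μ) (∫ x in E, h (x, x) ∂μ)
      = (μ.real E)⁻¹ * ‖(∫ p in E ×ˢ E, h p ∂μ.prod μ) - μ.real E * ∫ x in E, h (x, x) ∂μ‖ := by
        rw [Real.dist_eq, Real.norm_eq_abs, ← abs_of_pos (inv_pos.2 hpos), ← abs_mul, mul_sub,
          inv_mul_cancel_left₀ hpos.ne', abs_of_pos (inv_pos.2 hpos)]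
    _ ≤ (μ.real E)⁻¹ * (δ * μ.real E ^ 2) := by gcongr
    _ = δ * μ.real E := by field_simp

namespace BorelPartition

variable {X : Type*} [TopologicalSpace X] [MeasurableSpace X]

def IsFine (P : BorelPartition X) (R : X → X → Prop) : Prop :=
  ∀ E ∈ P.parts, ∀ x ∈ E, ∀ x' ∈ E, R x x'

lemma IsFine.mono {P Q : BorelPartition X} {R R' : X → X → Prop} (hP : P.IsFine R) (hPQ : P ≤ Q)
    (hR : ∀ x x', R x x' → R' x x') : Q.IsFine R' := by
  intro F hF x hx x' hx'
  obtain ⟨E, hE, hFE⟩ := hPQ F hF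
  exact hR x x' (hP E hE x (hFE hx) x' (hFE hx'))

lemma biUnion_parts (P : BorelPartition X) : ⋃ E ∈ P.parts, E = univ := by
  rw [← P.cover, sUnion_eq_biUnion, Finset.set_biUnion_coe]

lemma exists_forall_exists_subset {ι : Type*} (t : Finset ι) (s : ι → Set X)
    (hs : ∀ i ∈ t, MeasurableSet (s i)) (hcover : ⋃ i ∈ t, s i = univ) :
    ∃ P : BorelPartition X, ∀ E ∈ P.parts, ∃ i ∈ t, E ⊆ s i := by
  let e := t.equivFin.symm
  let d := disjointed fun k => s (e k)
  have hd : ∀ k, MeasurableSet (d k) := fun k => by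
    rw [show d k = _ from disjointed_apply _ k, Finset.sup_set_eq_biUnion]
    exact (hs _ (e k).2).diff (Finset.measurableSet_biUnion _ fun j _ => hs _ (e j).2)
  refine ⟨⟨Finset.univ.image d, ?_, ?_, ?_⟩, ?_⟩
  · simpa using hd
  · rw [Finset.coe_image]
    rintro _ ⟨k, -, rfl⟩ _ ⟨l, -, rfl⟩ hne
    exact disjoint_disjointed (fun k => s (e k)) fun h : k = l => hne (congrArg d h)
  · rw [Finset.coe_image, sUnion_image, Finset.coe_univ, biUnion_univ, iUnion_disjointed,
      e.surjective.iUnion_comp (fun i : t => s i), ← hcover, iUnion_subtype]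
  · simp only [Finset.mem_image, Finset.mem_univ, true_and, forall_exists_index,
      forall_apply_eq_imp_iff]
    exact fun k => ⟨e k, (e k).2, disjointed_subset _ k⟩

lemma exists_forall_exists_subset_of_nhds [CompactSpace X] [OpensMeasurableSpace X]
    (U : X → Set X) (hU : ∀ x, U x ∈ 𝓝 x) :
    ∃ P : BorelPartition X, ∀ E ∈ P.parts, ∃ x, E ⊆ U x := by
  obtain ⟨t, ht⟩ := CompactSpace.elim_nhds_subcover (fun x => interior (U x))
    fun x => interior_mem_nhds.2 (hU x)
  obtain ⟨P, hP⟩ := exists_forall_exists_subset t _ (fun x _ => isOpen_interior.measurableSet) ht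
  refine ⟨P, fun E hE => ?_⟩
  obtain ⟨x, -, hx⟩ := hP E hE
  exact ⟨x, hx.trans interior_subset⟩

lemma sum_measureReal_parts (P : BorelPartition X) (μ : Measure X) [IsFiniteMeasure μ] :
    ∑ E ∈ P.parts, μ.real E = μ.real univ := by
  rw [← P.biUnion_parts]
  exact (measureReal_biUnion_finset (f := fun E => E) P.disj P.meas).symm

lemma integral_eq_sum_setIntegral (P : BorelPartition X) {μ : Measure X} {g : X → ℝ}
    (hg : Integrable g μ) : ∫ x, g x ∂μ = ∑ E ∈ P.parts, ∫ x in E, g x ∂μ := by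
  rw [← setIntegral_univ, ← P.biUnion_parts,
    integral_biUnion_finset _ P.meas P.disj fun _ _ => hg.integrableOn]

section CompactGroup

variable {G : Type*} [Group G] [TopologicalSpace G] [IsTopologicalGroup G] [CompactSpace G]
  [MeasurableSpace G] [OpensMeasurableSpace G]

lemma exists_isFine_div_mem {W : Set G} (hW : W ∈ 𝓝 1) :
    ∃ P : BorelPartition G, P.IsFine fun x x' => x' / x ∈ W := by
  obtain ⟨V, hV, hVW⟩ := exists_nhds_split_inv hW
  obtain ⟨P, hP⟩ := exists_forall_exists_subset_of_nhds (fun g => (· / g) ⁻¹' V)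
    fun g => (continuous_div_right' g).tendsto' g 1 (div_self' g) hV
  refine ⟨P, fun E hE x hx x' hx' => ?_⟩
  obtain ⟨g, hg⟩ := hP E hE
  simpa using hVW _ (hg hx') _ (hg hx)

lemma exists_isFine_dist_lt {Z : Type*} [PseudoMetricSpace Z] (h : C(G × G, Z))
    {δ : ℝ} (hδ : 0 < δ) :
    ∃ P : BorelPartition G, P.IsFine fun x x' => dist (h (x, x')) (h (x, x)) < δ := by
  -- `Φ.curry u = fun x => h (x, u * x)`, and `Φ.curry` is continuous into `C(G, Z)` with the
  -- sup metric: this is the uniform continuity of `h`.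
  let Φ : C(G × G, Z) := h.comp ⟨fun p => (p.2, p.1 * p.2), by fun_prop⟩
  obtain ⟨P, hP⟩ := exists_isFine_div_mem
    (Metric.tendsto_nhds.1 (Φ.curry.continuous.tendsto 1) δ hδ)
  refine ⟨P, hP.mono le_rfl fun x x' hx => ?_⟩
  calc dist (h (x, x')) (h (x, x)) = dist (Φ.curry (x' / x) x) (Φ.curry 1 x) := by simp [Φ]
    _ ≤ dist (Φ.curry (x' / x)) (Φ.curry 1) := ContinuousMap.dist_apply_le_dist x
    _ < δ := hx

end CompactGroup

end BorelPartition

lemma MeasureTheory.Measure.isMulRightInvariant_of_isProbabilityMeasure {G : Type*} [Group G]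
    [TopologicalSpace G] [IsTopologicalGroup G] [LocallyCompactSpace G] [MeasurableSpace G]
    [BorelSpace G] (μ : Measure G) [μ.IsHaarMeasure] [IsProbabilityMeasure μ] :
    μ.IsMulRightInvariant where
  map_mul_right_eq_self g := by
    have : IsProbabilityMeasure (μ.map (· * g)) :=
      isProbabilityMeasure_map (measurable_mul_const g).aemeasurable
    exact isHaarMeasure_eq_of_isProbabilityMeasure _ μ

lemma integral_partMeasure {G : Type*} [Group G] [TopologicalSpace G] [ContinuousMul G]
    [CompactSpace G] [T2Space G] [MeasurableSpace G] [BorelSpace G] (lam : Measure G)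
    [IsFiniteMeasure lam] [lam.IsMulRightInvariant] (y : G) (P : BorelPartition G) (f : C(G × G, ℝ)) :
    ∫ z, f z ∂partMeasure lam y P
      = ∑ E ∈ P.parts, (lam.real E)⁻¹ * ∫ p in E ×ˢ E, f (p.1, p.2 * y) ∂lam.prod lam := by
  have hT : MeasurePreserving (Prod.map id (· * y)) (lam.prod lam) (lam.prod lam) :=
    (MeasurePreserving.id lam).prod (measurePreserving_mul_right lam y)
  have hTemb : MeasurableEmbedding (Prod.map id (· * y)) :=
    (MeasurableEquiv.prodCongr (.refl G) (.mulRight y)).measurableEmbedding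
  rw [partMeasure, integral_finsetSum_measure fun E hE =>
    (f.integrable_prod _).restrict.smul_measure (ENNReal.inv_ne_top.2 (Finset.mem_filter.1 hE).2)]
  refine (Finset.sum_congr rfl fun E _ => ?_).trans (Finset.sum_filter_of_ne fun E _ hne => ?_)
  · rw [integral_smul_measure, ENNReal.toReal_inv, smul_eq_mul, ← image_id E,
      ← prodMap_image_prod, hT.setIntegral_image_emb hTemb, image_id]
    rfl
  · contrapose! hne
    simp [measureReal_def, hne]

/-- The net `(ν_{y,P})_P`, indexed by finite Borel partitions ordered by refinement,
converges weak* to the pushforward `ν_y` of the Haar measure `λ` under `x ↦ (x, x·y)`. -/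
theorem stmt9 {G : Type*} [Group G] [TopologicalSpace G] [IsTopologicalGroup G]
    [CompactSpace G] [T2Space G] [MeasurableSpace G] [BorelSpace G]
    (lam : Measure G) [lam.IsHaarMeasure] [IsProbabilityMeasure lam] (y : G) :
    ∀ f : C(G × G, ℝ),
      Tendsto (fun P : BorelPartition G => ∫ z, f z ∂(partMeasure lam y P))
        atTop (nhds (∫ z, f z ∂(lam.map (fun x => (x, x * y))))) := by
  intro f
  have := lam.isMulRightInvariant_of_isProbabilityMeasure
  let h : C(G × G, ℝ) := f.comp ⟨fun p => (p.1, p.2 * y), by fun_prop⟩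
  have hdiag : Integrable (fun x => f (x, x * y)) lam :=
    (h.continuous.comp (continuous_id.prodMk continuous_id)).integrable_of_hasCompactSupport
      (.of_compactSpace _)
  rw [integral_map (by fun_prop) f.measurable_prod.aestronglyMeasurable, Metric.tendsto_nhds]
  intro ε hε
  obtain ⟨P₀, hP₀⟩ := BorelPartition.exists_isFine_dist_lt h (half_pos hε)
  filter_upwards [mem_atTop P₀] with P hP
  rw [integral_partMeasure, P.integral_eq_sum_setIntegral hdiag]
  calc dist (∑ E ∈ P.parts, _) (∑ E ∈ P.parts, _)
      ≤ ∑ E ∈ P.parts, ε / 2 * lam.real E := by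
        refine (dist_sum_sum_le _ _ _).trans (Finset.sum_le_sum fun E hE => ?_)
        exact dist_inv_mul_setIntegral_prod_setIntegral_diag_le lam E (h.integrable_prod _) hdiag
          fun x hx x' hx' => (hP₀.mono hP fun _ _ => le_of_lt) E hE x hx x' hx'
    _ = ε / 2 := by rw [← Finset.mul_sum, P.sum_measureReal_parts, probReal_univ, mul_one]
    _ < ε := half_lt_self hε
end

section
/- Let g : K → L be a continuous surjection of compact Hausdorff spaces. Then for each regular Borel probability measure ν on L there exists a regular Borel probability measure μ on K such that g[μ] = ν and the family {g⁻¹(B) : B ∈ Bor(L)} is Δ-dense in Bor(K) with respect to μ, i.e., for every ε > 0 and every Borel A ⊆ K there is a Borel B ⊆ L with μ(A Δ g⁻¹(B)) < ε. -/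
/-!
Call a *partial lift* of `ν` a finite measure on a σ-algebra `Σ ⊇ g⁻¹(Bor L)` that agrees
with `ν` on preimages, in which every `Σ`-set is within any `ε` of a preimage and can be
approximated from inside by closed `Σ`-sets. Pushing `ν` forward along a set-theoretic section
of `g` gives one on `g⁻¹(Bor L)`. Zorn's lemma applies to partial lifts ordered by extension:
on the union of a chain the induced content is σ-additive because closed subsets of the compact
space `K` form a compact system, and its Carathéodory extension keeps both approximation
properties. A maximal partial lift measures every closed set `T`, since `T` can always be
adjoined by giving it all the mass of its measurable hull; this makes `T` almost equal to its
hull, so the density of preimages survives. The σ-algebra of a maximal partial lift thus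
contains `Bor K`, and inner regularity by closed, hence compact, sets makes the restriction to
`Bor K` regular.
-/

open MeasureTheory Set Filter Topology
open scoped ENNReal symmDiff

namespace MeasureTheory

section CompactSystem

variable {α : Type*} {C S : Set (Set α)}

theorem AddContent.tendsto_zero_of_isCompactSystem (hC : IsSetRing C)
    (m : AddContent ℝ≥0∞ C) (hS : IsCompactSystem S)
    (h : ∀ s ∈ C, ∀ ε ≠ 0, ∃ t ∈ C, t ∈ S ∧ t ⊆ s ∧ m (s \ t) < ε)
    ⦃s : ℕ → Set α⦄ (hs : ∀ n, s n ∈ C) (hanti : Antitone s)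
    (hempty : ⋂ n, s n = ∅) : Tendsto (fun n ↦ m (s n)) atTop (𝓝 0) := by
  refine ENNReal.tendsto_atTop_zero.2 fun ε hε ↦ ?_
  obtain ⟨δ, hδ, hδε⟩ := ENNReal.exists_pos_sum_of_countable' hε.ne' ℕ
  choose t htC htS hts hst using fun n ↦ h (s n) (hs n) (δ n) (hδ n).ne'
  obtain ⟨N, hN⟩ := hS t htS (subset_empty_iff.1 <| hempty ▸ iInter_mono hts)
  refine ⟨N, fun n hn ↦ ?_⟩
  have hcover : s n ⊆ ⋃ k ∈ Finset.range (N + 1), s k \ t k := by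
    intro x hx
    obtain ⟨k, hk, hxk⟩ : ∃ k ≤ N, x ∉ t k := by
      by_contra! hall
      exact (hN ▸ mem_dissipate.2 hall : x ∈ (∅ : Set α))
    exact mem_biUnion (Finset.mem_range_succ_iff.2 hk) ⟨hanti (hk.trans hn) hx, hxk⟩
  have hdiff : ∀ k ∈ Finset.range (N + 1), s k \ t k ∈ C :=
    fun k _ ↦ hC.sdiff_mem (hs k) (htC k)
  calc m (s n) ≤ m (⋃ k ∈ Finset.range (N + 1), s k \ t k) :=
        addContent_mono hC.isSetSemiring (hs n) (hC.biUnion_mem _ hdiff) hcover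
    _ ≤ ∑ k ∈ Finset.range (N + 1), m (s k \ t k) := addContent_biUnion_le hC hdiff
    _ ≤ ∑' k, δ k := (Finset.sum_le_sum fun k _ ↦ (hst k).le).trans (ENNReal.sum_le_tsum _)
    _ ≤ ε := hδε.le

theorem AddContent.isSigmaSubadditive_of_isCompactSystem (hC : IsSetRing C)
    (m : AddContent ℝ≥0∞ C) (hm : ∀ s ∈ C, m s ≠ ∞) (hS : IsCompactSystem S)
    (h : ∀ s ∈ C, ∀ ε ≠ 0, ∃ t ∈ C, t ∈ S ∧ t ⊆ s ∧ m (s \ t) < ε) :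
    m.IsSigmaSubadditive :=
  isSigmaSubadditive_of_addContent_iUnion_eq_tsum hC fun _ hf hU hd ↦
    addContent_iUnion_eq_sum_of_tendsto_zero hC m hm
      (m.tendsto_zero_of_isCompactSystem hC hS h) hf hU hd

end CompactSystem

section InnerApprox

variable {α : Type*} [TopologicalSpace α] {m : MeasurableSpace α} (μ : Measure α)

def InnerApproxByClosed (s : Set α) : Prop :=
  ∀ ε ≠ 0, ∃ F ⊆ s, IsClosed F ∧ MeasurableSet F ∧ μ (s \ F) < ε

variable {μ}

theorem innerApproxByClosed_empty : InnerApproxByClosed μ ∅ :=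
  fun ε hε ↦ ⟨∅, subset_rfl, isClosed_empty, .empty, by simpa [pos_iff_ne_zero]⟩

theorem InnerApproxByClosed.iInter {s : ℕ → Set α} (h : ∀ n, InnerApproxByClosed μ (s n)) :
    InnerApproxByClosed μ (⋂ n, s n) := by
  intro ε hε
  obtain ⟨δ, hδ, hδε⟩ := ENNReal.exists_pos_sum_of_countable' hε ℕ
  choose F hFs hFc hFm hF using fun n ↦ h n (δ n) (hδ n).ne'
  refine ⟨⋂ n, F n, iInter_mono hFs, isClosed_iInter hFc, .iInter hFm, ?_⟩
  calc μ ((⋂ n, s n) \ ⋂ n, F n) ≤ μ (⋃ n, s n \ F n) := by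
        rw [sdiff_iInter]
        exact measure_mono (iUnion_mono fun n ↦ sdiff_subset_sdiff_left (iInter_subset _ n))
    _ ≤ ∑' n, μ (s n \ F n) := measure_iUnion_le _
    _ ≤ ∑' n, δ n := ENNReal.tsum_le_tsum fun n ↦ (hF n).le
    _ < ε := hδε

theorem InnerApproxByClosed.iUnion [IsFiniteMeasure μ] {s : ℕ → Set α}
    (hs : ∀ n, MeasurableSet (s n)) (h : ∀ n, InnerApproxByClosed μ (s n)) :
    InnerApproxByClosed μ (⋃ n, s n) := by
  intro ε hε
  have hε2 : ε / 2 ≠ 0 := (ENNReal.half_pos hε).ne'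
  obtain ⟨N, hN⟩ : ∃ N, μ (⋃ n, s n) < μ (accumulate s N) + ε / 2 :=
    ((tendsto_measure_iUnion_accumulate.add tendsto_const_nhds).eventually
      (lt_mem_nhds (ENNReal.lt_add_right (measure_ne_top μ _) hε2))).exists
  have hacc : MeasurableSet (accumulate s N) := .biUnion (to_countable _) fun k _ ↦ hs k
  obtain ⟨δ, hδ, hδε⟩ := ENNReal.exists_pos_sum_of_countable' hε2 ℕ
  choose F hFs hFc hFm hF using fun n ↦ h n (δ n) (hδ n).ne'
  refine ⟨accumulate F N, fun x hx ↦ ?_, (finite_Iic N).isClosed_biUnion fun n _ ↦ hFc n,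
    .biUnion (to_countable _) fun n _ ↦ hFm n, ?_⟩
  · obtain ⟨k, -, hxk⟩ := mem_accumulate.1 hx
    exact mem_iUnion.2 ⟨k, hFs k hxk⟩
  · have hcover : (⋃ n, s n) \ accumulate F N ⊆
        ((⋃ n, s n) \ accumulate s N) ∪ ⋃ n, s n \ F n := by
      rintro x ⟨hx, hxF⟩
      by_cases hxs : x ∈ accumulate s N
      · obtain ⟨k, hk, hxk⟩ := mem_accumulate.1 hxs
        exact Or.inr <| mem_iUnion.2
          ⟨k, hxk, fun hxFk ↦ hxF (mem_accumulate.2 ⟨k, hk, hxFk⟩)⟩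
      · exact Or.inl ⟨hx, hxs⟩
    have htail : μ (⋃ n, s n \ F n) < ε / 2 :=
      calc μ (⋃ n, s n \ F n) ≤ ∑' n, μ (s n \ F n) := measure_iUnion_le _
        _ ≤ ∑' n, δ n := ENNReal.tsum_le_tsum fun n ↦ (hF n).le
        _ < ε / 2 := hδε
    calc μ ((⋃ n, s n) \ accumulate F N)
        ≤ μ ((⋃ n, s n) \ accumulate s N) + μ (⋃ n, s n \ F n) :=
          (measure_mono hcover).trans (measure_union_le _ _)
      _ < ε / 2 + ε / 2 := ENNReal.add_lt_add (measure_sdiff_lt_of_lt_add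
          hacc.nullMeasurableSet (accumulate_subset_iUnion N) (measure_ne_top μ _) hN) htail
      _ = ε := ENNReal.add_halves ε

theorem InnerApproxByClosed.of_generateFrom [IsFiniteMeasure μ] {C : Set (Set α)}
    (hgen : m = MeasurableSpace.generateFrom C) (hC : IsSetAlgebra C)
    (h : ∀ s ∈ C, InnerApproxByClosed μ s) {s : Set α} (hs : MeasurableSet s) :
    InnerApproxByClosed μ s := by
  subst hgen
  -- The sets which are approximable together with their complements form a σ-algebra.
  suffices InnerApproxByClosed μ s ∧ InnerApproxByClosed μ sᶜ from this.1
  induction s, hs using MeasurableSpace.generateFrom_induction with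
  | hC t ht => exact ⟨h t ht, h _ (hC.compl_mem ht)⟩
  | empty => exact ⟨innerApproxByClosed_empty, compl_empty ▸ h _ hC.univ_mem⟩
  | compl t _ ih => exact ⟨ih.2, (compl_compl t).symm ▸ ih.1⟩
  | iUnion s hs ih =>
    exact ⟨.iUnion hs fun n ↦ (ih n).1, (compl_iUnion s).symm ▸ .iInter fun n ↦ (ih n).2⟩

theorem innerRegular_of_innerApproxByClosed [CompactSpace α]
    (h : ∀ s, MeasurableSet s → InnerApproxByClosed μ s) : μ.InnerRegular := by
  refine ⟨fun s hs r hr ↦ ?_⟩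
  obtain ⟨F, hFs, hFc, -, hF⟩ := h s hs (μ s - r) (tsub_pos_iff_lt.2 hr).ne'
  refine ⟨F, hFs, hFc.isCompact, lt_of_not_ge fun hFr ↦ ?_⟩
  exact (hF.trans_le' ((tsub_le_tsub_left hFr _).trans le_measure_sdiff)).false

end InnerApprox

section Adjoin

variable {α : Type*} {m : MeasurableSpace α} {T : Set α}

/-- The σ-algebra generated by `m` and `T`, given by its sets `T.ite A A' = A ∩ T ∪ A' \ T`. -/
abbrev _root_.MeasurableSpace.adjoin (m : MeasurableSpace α) (T : Set α) :
    MeasurableSpace α where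
  MeasurableSet' S := ∃ A A', MeasurableSet[m] A ∧ MeasurableSet[m] A' ∧ T.ite A A' = S
  measurableSet_empty := ⟨∅, ∅, .empty, .empty, by simp [Set.ite]⟩
  measurableSet_compl := by
    rintro _ ⟨A, A', hA, hA', rfl⟩
    refine ⟨Aᶜ, A'ᶜ, hA.compl, hA'.compl, ?_⟩
    ext x
    by_cases hx : x ∈ T <;> simp [Set.ite, hx]
  measurableSet_iUnion S hS := by
    choose A A' hA hA' hS using hS
    refine ⟨⋃ n, A n, ⋃ n, A' n, .iUnion hA, .iUnion hA', ?_⟩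
    simp only [Set.ite, ← hS, iUnion_inter, iUnion_sdiff, iUnion_union_distrib]

theorem _root_.MeasurableSpace.le_adjoin : m ≤ m.adjoin T :=
  fun A hA ↦ ⟨A, A, hA, hA, ite_same T A⟩

theorem _root_.MeasurableSpace.measurableSet_adjoin_self : MeasurableSet[m.adjoin T] T :=
  ⟨univ, ∅, .univ, .empty, by simp [Set.ite]⟩

theorem OuterMeasure.adjoin_le_caratheodory (ρ : OuterMeasure α) (hm : m ≤ ρ.caratheodory)
    (hT : ρ.IsCaratheodory T) : m.adjoin T ≤ ρ.caratheodory := by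
  rintro _ ⟨A, A', hA, hA', rfl⟩
  exact ρ.isCaratheodory_union (ρ.isCaratheodory_inter (hm _ hA) hT)
    (ρ.isCaratheodory_sdiff (hm _ hA') hT)

theorem OuterMeasure.isCaratheodory_restrict_of_measurableSet (μ : Measure α) (t : Set α)
    {s : Set α} (hs : MeasurableSet s) :
    (OuterMeasure.restrict t μ.toOuterMeasure).IsCaratheodory s := by
  intro u
  simp only [OuterMeasure.restrict_apply, Measure.coe_toOuterMeasure, inter_right_comm u s t,
    sdiff_inter_right_comm]
  exact le_toOuterMeasure_caratheodory μ s hs (u ∩ t)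

end Adjoin

section HullExtension

variable {α : Type*} {m : MeasurableSpace α} (μ : Measure α) (T : Set α)

/-- The extension of `μ` to `m.adjoin T` giving `T` all the mass of its measurable hull `H`:
`S ↦ μ (S ∩ T) + μ (S \ H)`, the first term being an outer measure. -/
noncomputable def Measure.hullExtension : @Measure α (m.adjoin T) :=
  @OuterMeasure.toMeasure α (m.adjoin T)
    (OuterMeasure.restrict T μ.toOuterMeasure +
      OuterMeasure.restrict (toMeasurable μ T)ᶜ μ.toOuterMeasure) <| by
    refine le_trans (le_inf ?_ ?_) (OuterMeasure.le_add_caratheodory _ _)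
    · refine OuterMeasure.adjoin_le_caratheodory _
        (fun s ↦ OuterMeasure.isCaratheodory_restrict_of_measurableSet μ T) fun u ↦ ?_
      simp [OuterMeasure.restrict_apply, inter_assoc]
    · refine OuterMeasure.adjoin_le_caratheodory _
        (fun s ↦ OuterMeasure.isCaratheodory_restrict_of_measurableSet μ _) fun u ↦ ?_
      have hdiff : u \ T ∩ (toMeasurable μ T)ᶜ = u ∩ (toMeasurable μ T)ᶜ := by
        rw [sdiff_eq, inter_assoc, ← compl_union, union_eq_right.2 (subset_toMeasurable μ T)]
      have hinter : u ∩ T ∩ (toMeasurable μ T)ᶜ = ∅ :=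
        subset_empty_iff.1 fun x hx ↦ hx.2 (subset_toMeasurable μ T hx.1.2)
      simp [OuterMeasure.restrict_apply, hdiff, hinter]

theorem Measure.hullExtension_apply {S : Set α} (hS : MeasurableSet[m.adjoin T] S) :
    μ.hullExtension T S = μ (S ∩ T) + μ (S ∩ (toMeasurable μ T)ᶜ) := by
  rw [Measure.hullExtension, @toMeasure_apply α (m.adjoin T) _ _ S hS]
  simp [OuterMeasure.restrict_apply]

variable [IsFiniteMeasure μ]

theorem Measure.hullExtension_apply_ite {A A' : Set α} (hA : MeasurableSet A)
    (hA' : MeasurableSet A') :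
    μ.hullExtension T (T.ite A A') =
      μ (A ∩ toMeasurable μ T) + μ (A' \ toMeasurable μ T) := by
  rw [μ.hullExtension_apply T ⟨A, A', hA, hA', rfl⟩, ite_inter_self, inter_comm A,
    ← measure_toMeasurable_inter hA (measure_ne_top μ T), inter_comm _ A]
  congr 2
  ext x
  by_cases hx : x ∈ T
  · simp [Set.ite, hx, subset_toMeasurable μ T hx]
  · simp [Set.ite, hx]

theorem Measure.hullExtension_apply_of_measurableSet {A : Set α} (hA : MeasurableSet A) :
    μ.hullExtension T A = μ A := by
  rw [← ite_same T A, μ.hullExtension_apply_ite T hA hA, ite_same,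
    measure_inter_add_sdiff _ (measurableSet_toMeasurable μ T)]

theorem Measure.hullExtension_toMeasurable_sdiff :
    μ.hullExtension T (toMeasurable μ T \ T) = 0 := by
  rw [← ite_empty_left, μ.hullExtension_apply_ite T .empty (measurableSet_toMeasurable μ T)]
  simp

theorem Measure.hullExtension_ite_symmDiff_ite (A A' : Set α) :
    μ.hullExtension T (T.ite A A' ∆ (toMeasurable μ T).ite A A') = 0 := by
  refine measure_mono_null (fun x hx ↦ ?_) (μ.hullExtension_toMeasurable_sdiff T)
  have := subset_toMeasurable μ T (a := x)
  by_cases hxT : x ∈ T <;> by_cases hxH : x ∈ toMeasurable μ T <;>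
    simp_all [Set.ite, mem_symmDiff]

theorem Measure.innerApproxByClosed_hullExtension [TopologicalSpace α] (hT : IsClosed T)
    (h : ∀ A, MeasurableSet A → InnerApproxByClosed μ A) {S : Set α}
    (hS : MeasurableSet[m.adjoin T] S) : InnerApproxByClosed (μ.hullExtension T) S := by
  obtain ⟨A, A', hA, hA', rfl⟩ := hS
  intro ε hε
  have hH := measurableSet_toMeasurable μ T
  have hε2 := (ENNReal.half_pos hε).ne'
  obtain ⟨F, hFA, hFc, hFm, hF⟩ := h _ (hA.inter hH) _ hε2
  obtain ⟨F', hFA', hFc', hFm', hF'⟩ := h _ (hA'.diff hH) _ hε2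
  refine ⟨F ∩ T ∪ F',
    union_subset_union (inter_subset_inter_left _ (hFA.trans inter_subset_left))
      (hFA'.trans (sdiff_subset_sdiff_right (subset_toMeasurable μ T))),
    (hFc.inter hT).union hFc',
    ((MeasurableSpace.le_adjoin _ hFm).inter MeasurableSpace.measurableSet_adjoin_self).union
      (MeasurableSpace.le_adjoin _ hFm'), ?_⟩
  calc μ.hullExtension T (T.ite A A' \ (F ∩ T ∪ F'))
      ≤ μ.hullExtension T (T.ite (A \ F) (A' \ F')) := by
        refine measure_mono fun x hx ↦ ?_
        by_cases hxT : x ∈ T <;> simp_all [Set.ite]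
    _ = μ ((A ∩ toMeasurable μ T) \ F) + μ ((A' \ toMeasurable μ T) \ F') := by
        rw [μ.hullExtension_apply_ite T (hA.diff hFm) (hA'.diff hFm'), sdiff_inter_right_comm,
          sdiff_right_comm]
    _ < ε / 2 + ε / 2 := ENNReal.add_lt_add hF hF'
    _ = ε := ENNReal.add_halves ε

end HullExtension

section PartialLift

variable {K L : Type*} [TopologicalSpace K] [MeasurableSpace L]

structure PartialLift (g : K → L) (ν : Measure L) where
  measurableSpace : MeasurableSpace K
  measure : @Measure K measurableSpace
  comap_le : MeasurableSpace.comap g ‹MeasurableSpace L› ≤ measurableSpace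
  measure_preimage : ∀ B, MeasurableSet B → measure (g ⁻¹' B) = ν B
  exists_preimage_symmDiff_lt : ∀ A, MeasurableSet[measurableSpace] A → ∀ ε, 0 < ε →
    ∃ B, MeasurableSet B ∧ measure (A ∆ (g ⁻¹' B)) < ε
  innerApproxByClosed : ∀ A, MeasurableSet[measurableSpace] A → InnerApproxByClosed measure A

namespace PartialLift

variable {g : K → L} {ν : Measure L}

instance : Preorder (PartialLift g ν) where
  le e f := e.measurableSpace ≤ f.measurableSpace ∧
    ∀ A, MeasurableSet[e.measurableSpace] A → f.measure A = e.measure A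
  le_refl _ := ⟨le_rfl, fun _ _ ↦ rfl⟩
  le_trans _ _ _ hef hfh :=
    ⟨hef.1.trans hfh.1, fun A hA ↦ (hfh.2 A (hef.1 A hA)).trans (hef.2 A hA)⟩

instance [IsFiniteMeasure ν] (e : PartialLift g ν) : IsFiniteMeasure e.measure :=
  ⟨by simpa using e.measure_preimage univ .univ ▸ measure_lt_top ν univ⟩

noncomputable def ofSurjective [TopologicalSpace L] [OpensMeasurableSpace L] [IsFiniteMeasure ν]
    [ν.WeaklyRegular] (hg : Continuous g) (hs : Function.Surjective g) : PartialLift g ν :=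
  letI : MeasurableSpace K := MeasurableSpace.comap g ‹_›
  have hsec : Measurable (Function.surjInv hs) := by
    rw [measurable_iff_comap_le, MeasurableSpace.comap_comp,
      (Function.rightInverse_surjInv hs).comp_eq_id, MeasurableSpace.comap_id]
  have hmap : ∀ B, MeasurableSet B → ν.map (Function.surjInv hs) (g ⁻¹' B) = ν B :=
    fun B hB ↦ by
      rw [Measure.map_apply hsec ⟨B, hB, rfl⟩, ← preimage_comp,
        (Function.rightInverse_surjInv hs).comp_eq_id, preimage_id]
  { measurableSpace := MeasurableSpace.comap g ‹_›
    measure := ν.map (Function.surjInv hs)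
    comap_le := le_rfl
    measure_preimage := hmap
    exists_preimage_symmDiff_lt := by
      rintro _ ⟨B, hB, rfl⟩ ε hε
      exact ⟨B, hB, by simpa using hε⟩
    innerApproxByClosed := by
      rintro _ ⟨B, hB, rfl⟩ ε hε
      obtain ⟨F, hFB, hFc, hF⟩ := hB.exists_isClosed_sdiff_lt (measure_ne_top ν B) hε
      refine ⟨g ⁻¹' F, preimage_mono hFB, hFc.preimage hg, ⟨F, hFc.measurableSet, rfl⟩,
        ?_⟩
      rwa [← preimage_sdiff, hmap _ (hB.diff hFc.measurableSet)] }

section Chain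

variable {c : Set (PartialLift g ν)}

def chainSets (c : Set (PartialLift g ν)) : Set (Set K) :=
  {A | ∃ e ∈ c, MeasurableSet[e.measurableSpace] A}

theorem isSetAlgebra_chainSets (hc : IsChain (· ≤ ·) c) (hne : c.Nonempty) :
    IsSetAlgebra (chainSets c) where
  empty_mem := ⟨hne.some, hne.some_mem, MeasurableSpace.measurableSet_empty _⟩
  compl_mem := fun _ ⟨e, he, hA⟩ ↦ ⟨e, he, hA.compl⟩
  union_mem := fun _ _ ⟨e, he, hA⟩ ⟨f, hf, hB⟩ ↦
    let ⟨d, hd, hed, hfd⟩ := hc.directedOn e he f hf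
    ⟨d, hd, (hed.1 _ hA).union (hfd.1 _ hB)⟩

theorem measurableSet_generateFrom_chainSets {e : PartialLift g ν} (he : e ∈ c) {A : Set K}
    (hA : MeasurableSet[e.measurableSpace] A) :
    MeasurableSet[MeasurableSpace.generateFrom (chainSets c)] A :=
  MeasurableSpace.measurableSet_generateFrom ⟨e, he, hA⟩

theorem measure_eq_of_isChain (hc : IsChain (· ≤ ·) c) {e f : PartialLift g ν} (he : e ∈ c)
    (hf : f ∈ c) {A : Set K} (hAe : MeasurableSet[e.measurableSpace] A)
    (hAf : MeasurableSet[f.measurableSpace] A) : e.measure A = f.measure A := by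
  rcases hc.total he hf with h | h
  · exact (h.2 A hAe).symm
  · exact h.2 A hAf

open Classical in
noncomputable def chainFun (c : Set (PartialLift g ν)) (A : Set K) : ℝ≥0∞ :=
  if h : ∃ e ∈ c, MeasurableSet[e.measurableSpace] A then h.choose.measure A else 0

theorem chainFun_eq (hc : IsChain (· ≤ ·) c) {e : PartialLift g ν} (he : e ∈ c) {A : Set K}
    (hA : MeasurableSet[e.measurableSpace] A) : chainFun c A = e.measure A := by
  have h : ∃ e ∈ c, MeasurableSet[e.measurableSpace] A := ⟨e, he, hA⟩
  rw [chainFun, dif_pos h]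
  exact measure_eq_of_isChain hc h.choose_spec.1 he h.choose_spec.2 hA

noncomputable def chainContent (hc : IsChain (· ≤ ·) c) (hne : c.Nonempty) :
    AddContent ℝ≥0∞ (chainSets c) :=
  (isSetAlgebra_chainSets hc hne).isSetRing.addContent_of_union (chainFun c)
    ((chainFun_eq hc hne.some_mem (MeasurableSpace.measurableSet_empty _)).trans measure_empty)
    fun {s t} ⟨e, he, hs⟩ ⟨f, hf, ht⟩ hst ↦ by
      obtain ⟨d, hd, hed, hfd⟩ := hc.directedOn e he f hf
      rw [chainFun_eq hc hd ((hed.1 _ hs).union (hfd.1 _ ht)), chainFun_eq hc hd (hed.1 _ hs),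
        chainFun_eq hc hd (hfd.1 _ ht), measure_union hst (hfd.1 _ ht)]

theorem chainContent_apply (hc : IsChain (· ≤ ·) c) (hne : c.Nonempty) (A : Set K) :
    chainContent hc hne A = chainFun c A := rfl

variable [CompactSpace K] [IsFiniteMeasure ν]

theorem chainContent_isSigmaSubadditive (hc : IsChain (· ≤ ·) c) (hne : c.Nonempty) :
    (chainContent hc hne).IsSigmaSubadditive := by
  refine AddContent.isSigmaSubadditive_of_isCompactSystem
    (isSetAlgebra_chainSets hc hne).isSetRing _ (fun s ⟨e, he, hs⟩ ↦ ?_)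
    (isCompactSystem_isCompact_isClosed K) fun s ⟨e, he, hs⟩ ε hε ↦ ?_
  · rw [chainContent_apply, chainFun_eq hc he hs]
    exact measure_ne_top _ _
  · obtain ⟨F, hFs, hFc, hFm, hF⟩ := e.innerApproxByClosed s hs ε hε
    refine ⟨F, ⟨e, he, hFm⟩, ⟨hFc.isCompact, hFc⟩, hFs, ?_⟩
    rwa [chainContent_apply, chainFun_eq hc he (hs.diff hFm)]

noncomputable def chainMeasure (hc : IsChain (· ≤ ·) c) (hne : c.Nonempty) :
    @Measure K (MeasurableSpace.generateFrom (chainSets c)) :=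
  @AddContent.measure K _ (MeasurableSpace.generateFrom _) (chainContent hc hne)
    (isSetAlgebra_chainSets hc hne).isSetRing.isSetSemiring le_rfl
    (chainContent_isSigmaSubadditive hc hne)

theorem chainMeasure_eq (hc : IsChain (· ≤ ·) c) (hne : c.Nonempty) {e : PartialLift g ν}
    (he : e ∈ c) {A : Set K} (hA : MeasurableSet[e.measurableSpace] A) :
    chainMeasure hc hne A = e.measure A := by
  rw [chainMeasure, AddContent.measure_eq (mα := .generateFrom (chainSets c)) _ _ rfl _
    ⟨e, he, hA⟩, chainContent_apply, chainFun_eq hc he hA]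

instance (hc : IsChain (· ≤ ·) c) (hne : c.Nonempty) : IsFiniteMeasure (chainMeasure hc hne) :=
  ⟨by rw [chainMeasure_eq hc hne hne.some_mem .univ]; exact measure_lt_top _ _⟩

noncomputable def chainUpperBound (hc : IsChain (· ≤ ·) c) (hne : c.Nonempty) :
    PartialLift g ν where
  measurableSpace := MeasurableSpace.generateFrom (chainSets c)
  measure := chainMeasure hc hne
  comap_le := hne.some.comap_le.trans fun _ ↦ measurableSet_generateFrom_chainSets hne.some_mem
  measure_preimage B hB := by
    rw [chainMeasure_eq hc hne hne.some_mem (hne.some.comap_le _ ⟨B, hB, rfl⟩),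
      hne.some.measure_preimage B hB]
  exists_preimage_symmDiff_lt A hA ε hε := by
    have hC := isSetAlgebra_chainSets hc hne
    obtain ⟨t, ⟨e, he, ht⟩, hAt⟩ :=
      exists_measure_symmDiff_lt_of_generateFrom_isSetRing (mα := .generateFrom (chainSets c))
        (μ := chainMeasure hc hne) hC.isSetRing
        ⟨{univ}, countable_singleton _, singleton_subset_iff.2 hC.univ_mem, by simp⟩ rfl hA
        (ENNReal.half_pos hε.ne')
    obtain ⟨B, hB, htB⟩ := e.exists_preimage_symmDiff_lt t ht _ (ENNReal.half_pos hε.ne')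
    refine ⟨B, hB, ?_⟩
    calc chainMeasure hc hne (A ∆ (g ⁻¹' B))
        ≤ chainMeasure hc hne (t ∆ A) + chainMeasure hc hne (t ∆ (g ⁻¹' B)) := by
          rw [symmDiff_comm t]; exact measure_symmDiff_le _ _ _
      _ < ε / 2 + ε / 2 := by
          rw [chainMeasure_eq hc hne he (ht.symmDiff (e.comap_le _ ⟨B, hB, rfl⟩))]
          exact ENNReal.add_lt_add hAt htB
      _ = ε := ENNReal.add_halves ε
  innerApproxByClosed _ :=
    InnerApproxByClosed.of_generateFrom rfl (isSetAlgebra_chainSets hc hne)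
      fun s ⟨e, he, hs⟩ ε hε ↦ by
        obtain ⟨F, hFs, hFc, hFm, hF⟩ := e.innerApproxByClosed s hs ε hε
        exact ⟨F, hFs, hFc, measurableSet_generateFrom_chainSets he hFm,
          by rwa [chainMeasure_eq hc hne he (hs.diff hFm)]⟩

theorem le_chainUpperBound (hc : IsChain (· ≤ ·) c) (hne : c.Nonempty) {e : PartialLift g ν}
    (he : e ∈ c) : e ≤ chainUpperBound hc hne :=
  ⟨fun _ ↦ measurableSet_generateFrom_chainSets he, fun _ ↦ chainMeasure_eq hc hne he⟩

end Chain

section Extend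

variable [IsFiniteMeasure ν]

noncomputable def extend (e : PartialLift g ν) {T : Set K} (hT : IsClosed T) :
    PartialLift g ν where
  measurableSpace := e.measurableSpace.adjoin T
  measure := e.measure.hullExtension T
  comap_le := e.comap_le.trans MeasurableSpace.le_adjoin
  measure_preimage B hB := by
    rw [e.measure.hullExtension_apply_of_measurableSet T (e.comap_le _ ⟨B, hB, rfl⟩),
      e.measure_preimage B hB]
  exists_preimage_symmDiff_lt := by
    rintro _ ⟨A, A', hA, hA', rfl⟩ ε hε
    let _ := e.measurableSpace
    have hAH := (measurableSet_toMeasurable e.measure T).ite hA hA'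
    obtain ⟨B, hB, hlt⟩ := e.exists_preimage_symmDiff_lt _ hAH ε hε
    refine ⟨B, hB, (measure_symmDiff_le _ ((toMeasurable e.measure T).ite A A') _).trans_lt ?_⟩
    rwa [e.measure.hullExtension_ite_symmDiff_ite, zero_add,
      e.measure.hullExtension_apply_of_measurableSet T
        (hAH.symmDiff (e.comap_le _ ⟨B, hB, rfl⟩))]
  innerApproxByClosed _ :=
    e.measure.innerApproxByClosed_hullExtension T hT e.innerApproxByClosed

theorem le_extend (e : PartialLift g ν) {T : Set K} (hT : IsClosed T) : e ≤ e.extend hT :=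
  ⟨MeasurableSpace.le_adjoin, fun _ hA ↦ e.measure.hullExtension_apply_of_measurableSet T hA⟩

theorem measurableSet_extend (e : PartialLift g ν) {T : Set K} (hT : IsClosed T) :
    MeasurableSet[(e.extend hT).measurableSpace] T :=
  @MeasurableSpace.measurableSet_adjoin_self _ e.measurableSpace T

end Extend

theorem exists_le_measurableSpace [MeasurableSpace K] [BorelSpace K] [CompactSpace K]
    [TopologicalSpace L] [OpensMeasurableSpace L] [IsFiniteMeasure ν] [ν.WeaklyRegular]
    (hg : Continuous g) (hs : Function.Surjective g) :
    ∃ e : PartialLift g ν, ‹MeasurableSpace K› ≤ e.measurableSpace := by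
  have : Nonempty (PartialLift g ν) := ⟨ofSurjective (ν := ν) hg hs⟩
  obtain ⟨e, he⟩ := zorn_le_nonempty (α := PartialLift g ν) fun c hc hne ↦
    ⟨chainUpperBound hc hne, fun _ ↦ le_chainUpperBound hc hne⟩
  refine ⟨e, ?_⟩
  rw [BorelSpace.measurable_eq (α := K), borel_eq_generateFrom_isClosed]
  exact MeasurableSpace.generateFrom_le fun T hT ↦
    (he (e.le_extend hT)).1 _ (e.measurableSet_extend hT)

end PartialLift

end PartialLift

end MeasureTheory

theorem stmt10_general {K L : Type*}
    [TopologicalSpace K] [CompactSpace K] [T2Space K] [MeasurableSpace K] [BorelSpace K]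
    [TopologicalSpace L] [T2Space L] [MeasurableSpace L] [BorelSpace L]
    (g : C(K, L)) (hg : Function.Surjective g)
    (ν : Measure L) [IsProbabilityMeasure ν] [ν.Regular] :
    ∃ μ : Measure K, IsProbabilityMeasure μ ∧ μ.Regular ∧ μ.map g = ν ∧
      ∀ ε : ENNReal, 0 < ε → ∀ A : Set K, MeasurableSet A →
        ∃ B : Set L, MeasurableSet B ∧ μ (symmDiff A ((⇑g) ⁻¹' B)) < ε := by
  obtain ⟨e, he⟩ := PartialLift.exists_le_measurableSpace (ν := ν) g.continuous hg
  have htrim : ∀ A, MeasurableSet A → e.measure.trim he A = e.measure A :=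
    fun _ hA ↦ trim_measurableSet_eq he hA
  have : IsProbabilityMeasure (e.measure.trim he) :=
    ⟨by simpa [htrim _ .univ] using e.measure_preimage univ .univ⟩
  have : (e.measure.trim he).InnerRegular :=
    innerRegular_of_innerApproxByClosed fun A hA ε hε ↦ by
      obtain ⟨F, hFA, hFc, -, hF⟩ := e.innerApproxByClosed A (he _ hA) ε hε
      exact ⟨F, hFA, hFc, hFc.measurableSet, by rwa [htrim _ (hA.diff hFc.measurableSet)]⟩
  refine ⟨e.measure.trim he, inferInstance, inferInstance, ?_, fun ε hε A hA ↦ ?_⟩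
  · ext B hB
    rw [Measure.map_apply g.measurable hB, htrim _ (g.measurable hB), e.measure_preimage B hB]
  · obtain ⟨B, hB, hAB⟩ := e.exists_preimage_symmDiff_lt A (he _ hA) ε hε
    exact ⟨B, hB, by rwa [htrim _ (hA.symmDiff (g.measurable hB))]⟩

/-- For a continuous surjection `g : K → L` of compact Hausdorff spaces and any
regular Borel probability measure `ν` on `L`, there is a regular Borel probability
measure `μ` on `K` with `g[μ] = ν` such that `{g⁻¹(B) : B ∈ Bor(L)}` is `Δ`-dense
in `Bor(K)` with respect to `μ`. -/
theorem stmt10 {K L : Type*}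
    [TopologicalSpace K] [CompactSpace K] [T2Space K] [MeasurableSpace K] [BorelSpace K]
    [TopologicalSpace L] [CompactSpace L] [T2Space L] [MeasurableSpace L] [BorelSpace L]
    (g : C(K, L)) (hg : Function.Surjective g)
    (ν : Measure L) [IsProbabilityMeasure ν] [ν.Regular] :
    ∃ μ : Measure K, IsProbabilityMeasure μ ∧ μ.Regular ∧ μ.map g = ν ∧
      ∀ ε : ENNReal, 0 < ε → ∀ A : Set K, MeasurableSet A →
        ∃ B : Set L, MeasurableSet B ∧ μ (symmDiff A ((⇑g) ⁻¹' B)) < ε :=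
  stmt10_general g hg ν
end

section
/- Let K and L be compact Hausdorff spaces, n a natural number, and φ : L → [K]^n a map into n-element subsets of K that is lower semicontinuous with respect to the Vietoris topology (i.e., {y : φ(y) ∩ U ≠ ∅} is open for every open U ⊆ K). Then φ is also upper semicontinuous: {y : φ(y) ⊆ U} is open for every open U ⊆ K. -/
/-- A lower semicontinuous map `φ : L → [K]^n` into `n`-element subsets of a
compact Hausdorff space `K` is automatically upper semicontinuous. -/
theorem stmt14 {K L : Type*}
    [TopologicalSpace K] [CompactSpace K] [T2Space K]
    [TopologicalSpace L] [CompactSpace L] [T2Space L]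
    (n : ℕ) (φ : L → Finset K) (hcard : ∀ y : L, (φ y).card = n)
    (hlsc : ∀ U : Set K, IsOpen U → IsOpen {y : L | ∃ x ∈ φ y, x ∈ U}) :
    ∀ U : Set K, IsOpen U → IsOpen {y : L | ∀ x ∈ φ y, x ∈ U} := by
  intro U hU
  rw [isOpen_iff_forall_mem_open]
  intro y₀ hy₀
  -- separate the points of φ y₀ by pairwise disjoint open sets
  obtain ⟨V, hV, hVd⟩ := (φ y₀ : Set K).toFinite.t2_separation
  set W : Set L := ⋂ x ∈ φ y₀, {y : L | ∃ z ∈ φ y, z ∈ V x ∩ U}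
  have hWopen : IsOpen W := by
    apply isOpen_biInter_finset
    intro x _
    exact hlsc (V x ∩ U) ((hV x).2.inter hU)
  have hy₀W : y₀ ∈ W := by
    refine Set.mem_iInter₂.2 fun x hx => ⟨x, hx, (hV x).1, hy₀ x hx⟩
  refine ⟨W, ?_, hWopen, hy₀W⟩
  intro y hy z hz
  simp only [W, Set.mem_iInter₂] at hy
  -- choice function
  classical
  choose g hg1 hg2 using hy
  -- g is injective on φ y₀
  have hinj : Set.InjOn (fun x => if h : x ∈ φ y₀ then g x h else x) (φ y₀) := by
    intro a ha b hb hab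
    rw [Finset.mem_coe] at ha hb
    simp only [dif_pos ha, dif_pos hb] at hab
    by_contra hne
    have := hVd ha hb hne
    exact Set.not_disjoint_iff.2 ⟨g a ha, (hg2 a ha).1, hab ▸ (hg2 b hb).1⟩ this
  have himg : (φ y₀).image (fun x => if h : x ∈ φ y₀ then g x h else x) = φ y := by
    apply Finset.eq_of_subset_of_card_le
    · intro w hw
      obtain ⟨a, ha, rfl⟩ := Finset.mem_image.1 hw
      simp only [dif_pos ha]
      exact hg1 a ha
    · rw [Finset.card_image_of_injOn (by simpa using hinj), hcard, hcard]
  rw [← himg] at hz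
  obtain ⟨a, ha, rfl⟩ := Finset.mem_image.1 hz
  simp only [dif_pos ha]
  exact (hg2 a ha).2
end

section
/- Let K be a compact Hausdorff space, L a compact metrizable space, n ∈ ℕ, and φ : L → [K]^n a Vietoris-continuous map into n-element subsets of K. Then the set K₀ = ⋃_{y ∈ L} φ(y) is a compact metrizable subspace of K. -/
open TopologicalSpace Set Function

lemma aux_metrizable {X Y : Type*} [TopologicalSpace X] [TopologicalSpace Y]
    [CompactSpace X] [T2Space X] [SecondCountableTopology X]
    [CompactSpace Y] [T2Space Y]
    (f : X → Y) (hf : Continuous f) (hsurj : Function.Surjective f) :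
    TopologicalSpace.MetrizableSpace Y := by
  haveI : LocallyCompactSpace X := inferInstance
  haveI : SecondCountableTopology C(X, ℝ) := inferInstance
  set S : Set C(X, ℝ) := {h | ∀ a b, f a = f b → h a = h b} with hS
  obtain ⟨D, hDc, hDd⟩ := TopologicalSpace.exists_countable_dense S
  let s : Y → X := Function.surjInv hsurj
  have hfs : ∀ y, f (s y) = y := Function.surjInv_eq hsurj
  have hq : Topology.IsQuotientMap f := (hf.isClosedMap).isQuotientMap hf hsurj
  haveI : Countable ↥D := hDc.to_subtype
  let e : Y → (↥D → ℝ) := fun y d => (d : ↥S).1 (s y)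
  have hcont : Continuous e := by
    refine continuous_pi fun d => ?_
    rw [hq.continuous_iff]
    have : ((fun y => e y d) ∘ f) = fun x => ((d : ↥S) : C(X, ℝ)) x := by
      funext x
      exact ((d : ↥S).2 _ _ (hfs (f x)))
    rw [this]
    exact ((d : ↥S) : C(X, ℝ)).continuous
  have hinj : Function.Injective e := by
    intro y y' hyy'
    by_contra hne
    obtain ⟨g, hg0, hg1, -⟩ := exists_continuous_zero_one_of_isClosed
      (isClosed_singleton (x := y)) (isClosed_singleton (x := y'))
      (by simpa [Set.disjoint_singleton] using hne)
    have hmem : g.comp ⟨f, hf⟩ ∈ S := by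
      intro a b hab
      simp [hab]
    obtain ⟨d, hdD, hdist⟩ := hDd.exists_dist_lt (⟨g.comp ⟨f, hf⟩, hmem⟩ : ↥S)
      (show (0:ℝ) < 1/2 by norm_num)
    have h1 : dist (((d : ↥S) : C(X, ℝ)) (s y)) ((g.comp ⟨f, hf⟩) (s y)) < 1/2 :=
      lt_of_le_of_lt (ContinuousMap.dist_apply_le_dist _)
        (by rw [dist_comm, Subtype.dist_eq] at hdist; exact hdist)
    have h2 : dist (((d : ↥S) : C(X, ℝ)) (s y')) ((g.comp ⟨f, hf⟩) (s y')) < 1/2 :=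
      lt_of_le_of_lt (ContinuousMap.dist_apply_le_dist _)
        (by rw [dist_comm, Subtype.dist_eq] at hdist; exact hdist)
    have hgy : (g.comp ⟨f, hf⟩) (s y) = 0 := by
      simp only [ContinuousMap.comp_apply, ContinuousMap.coe_mk, hfs]
      exact hg0 rfl
    have hgy' : (g.comp ⟨f, hf⟩) (s y') = 1 := by
      simp only [ContinuousMap.comp_apply, ContinuousMap.coe_mk, hfs]
      exact hg1 rfl
    have heq : ((d : ↥S) : C(X, ℝ)) (s y) = ((d : ↥S) : C(X, ℝ)) (s y') :=
      congrFun hyy' ⟨d, hdD⟩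
    rw [hgy] at h1
    rw [hgy'] at h2
    rw [heq] at h1
    rw [Real.dist_eq] at h1 h2
    have := abs_lt.1 h1
    have := abs_lt.1 h2
    linarith [ (abs_lt.1 h1).1, (abs_lt.1 h1).2, (abs_lt.1 h2).1, (abs_lt.1 h2).2 ]
  exact (hcont.isClosedEmbedding hinj).toIsEmbedding.metrizableSpace

lemma aux_sep {K : Type*} [TopologicalSpace K] [T2Space K] (t : Finset K) :
    ∃ V : K → Set K, (∀ x ∈ t, IsOpen (V x) ∧ x ∈ V x) ∧
      (∀ x ∈ t, ∀ x' ∈ t, x ≠ x' → Disjoint (V x) (V x')) := by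
  classical
  have h2 : ∀ a b : K, ∃ p : Set K × Set K, IsOpen p.1 ∧ IsOpen p.2 ∧
      (a ≠ b → a ∈ p.1 ∧ b ∈ p.2 ∧ Disjoint p.1 p.2) := by
    intro a b
    by_cases hab : a ≠ b
    · obtain ⟨u, v, hu, hv, ha, hb, hd⟩ := t2_separation hab
      exact ⟨(u, v), hu, hv, fun _ => ⟨ha, hb, hd⟩⟩
    · exact ⟨(univ, univ), isOpen_univ, isOpen_univ, fun h => absurd h hab⟩
  choose p hp1 hp2 hp3 using h2
  refine ⟨fun a => ⋂ b ∈ t.erase a, ((p a b).1 ∩ (p b a).2), fun x hx => ⟨?_, ?_⟩, ?_⟩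
  · exact isOpen_biInter_finset fun b _ => ((hp1 x b).inter (hp2 b x))
  · refine mem_biInter fun b hb => ?_
    have hbx : b ≠ x := Finset.ne_of_mem_erase hb
    exact ⟨(hp3 x b hbx.symm).1, (hp3 b x hbx).2.1⟩
  · intro x hx x' hx' hne
    have h1 : (⋂ b ∈ t.erase x, ((p x b).1 ∩ (p b x).2)) ⊆ (p x x').1 := by
      intro z hz
      exact (mem_iInter₂.1 hz x' (Finset.mem_erase.2 ⟨hne.symm, hx'⟩)).1
    have h2' : (⋂ b ∈ t.erase x', ((p x' b).1 ∩ (p b x').2)) ⊆ (p x x').2 := by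
      intro z hz
      exact (mem_iInter₂.1 hz x (Finset.mem_erase.2 ⟨hne, hx⟩)).2
    exact ((hp3 x x' hne).2.2).mono h1 h2'

/-- If `L` is a compact metrizable space and `φ : L → [K]^n` is Vietoris-continuous,
then `K₀ = ⋃_{y ∈ L} φ(y)` is a compact metrizable subspace of `K`. -/
theorem stmt16 {K L : Type*}
    [TopologicalSpace K] [CompactSpace K] [T2Space K]
    [TopologicalSpace L] [CompactSpace L] [T2Space L]
    [TopologicalSpace.MetrizableSpace L]
    (n : ℕ) (φ : L → Finset K) (hcard : ∀ y : L, (φ y).card = n)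
    (hlsc : ∀ U : Set K, IsOpen U → IsOpen {y : L | ∃ x ∈ φ y, x ∈ U})
    (husc : ∀ U : Set K, IsOpen U → IsOpen {y : L | ∀ x ∈ φ y, x ∈ U}) :
    IsCompact (⋃ y : L, ((φ y : Finset K) : Set K)) ∧
      TopologicalSpace.MetrizableSpace (⋃ y : L, ((φ y : Finset K) : Set K)) := by
  classical
  -- Part 1: compactness via closedness of the graph
  have hXcl : IsClosed {p : L × K | p.2 ∈ φ p.1} := by
    rw [← isOpen_compl_iff, isOpen_iff_forall_mem_open]
    rintro ⟨y, x⟩ hyx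
    simp only [mem_compl_iff, mem_setOf_eq] at hyx
    have hclosed : IsClosed ((φ y : Set K)) := (φ y).finite_toSet.isClosed
    have hdisj : Disjoint ((φ y : Set K)) ({x} : Set K) := by
      simpa [Set.disjoint_singleton_right] using hyx
    obtain ⟨U, Vx, hU, hVx, hsubU, hsubV, hUV⟩ :=
      NormalSpace.normal _ _ hclosed isClosed_singleton hdisj
    refine ⟨{y' : L | ∀ z ∈ φ y', z ∈ U} ×ˢ Vx, ?_, (husc U hU).prod hVx,
      ⟨fun z hz => hsubU (by exact_mod_cast hz), hsubV rfl⟩⟩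
    rintro ⟨y', x'⟩ ⟨hy', hx'⟩
    simp only [mem_compl_iff, mem_setOf_eq]
    intro hx'φ
    exact (Set.disjoint_left.1 hUV) (hy' x' hx'φ) hx'
  have hK0 : (⋃ y : L, ((φ y : Finset K) : Set K))
      = Prod.snd '' {p : L × K | p.2 ∈ φ p.1} := by
    ext x
    simp only [mem_iUnion, Finset.mem_coe, Set.mem_image, mem_setOf_eq, Prod.exists]
    exact ⟨fun ⟨y, hy⟩ => ⟨y, x, hy, rfl⟩, fun ⟨y, x', h, hx⟩ => ⟨y, hx ▸ h⟩⟩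
  have h1 : IsCompact (⋃ y : L, ((φ y : Finset K) : Set K)) := by
    rw [hK0]; exact hXcl.isCompact.image continuous_snd
  refine ⟨h1, ?_⟩
  haveI : CompactSpace (⋃ y : L, ((φ y : Finset K) : Set K)) :=
    isCompact_iff_compactSpace.1 h1
  -- Part 2: metrizability via local continuous selections
  choose V hV1 hV2 using fun y₀ : L => aux_sep (φ y₀)
  set W : L → Set K := fun y₀ => ⋃ x ∈ φ y₀, V y₀ x with hWdef
  set Ω : L → Set L := fun y₀ =>
    {y | ∀ z ∈ φ y, z ∈ W y₀} ∩ ⋂ x ∈ φ y₀, {y | ∃ z ∈ φ y, z ∈ V y₀ x} with hΩdef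
  have hΩopen : ∀ y₀, IsOpen (Ω y₀) := by
    intro y₀
    refine IsOpen.inter (husc _ ?_) (isOpen_biInter_finset fun x hx => hlsc _ (hV1 y₀ x hx).1)
    exact isOpen_biUnion fun x hx => (hV1 y₀ x hx).1
  have hΩmem : ∀ y₀, y₀ ∈ Ω y₀ := by
    intro y₀
    refine ⟨fun z hz => mem_biUnion hz (hV1 y₀ z hz).2, ?_⟩
    exact mem_iInter₂.2 fun x hx => ⟨x, hx, (hV1 y₀ x hx).2⟩
  have hΩspec : ∀ y₀ y, y ∈ Ω y₀ →
      (∀ z ∈ φ y, z ∈ W y₀) ∧ ∀ x ∈ φ y₀, ∃ z ∈ φ y, z ∈ V y₀ x := by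
    intro y₀ y hy
    obtain ⟨h1', h2'⟩ := hy
    exact ⟨h1', fun x hx => mem_iInter₂.1 h2' x hx⟩
  have hkey : ∀ y₀ y, y ∈ Ω y₀ → ∀ x ∈ φ y₀, ∃! z, z ∈ φ y ∧ z ∈ V y₀ x := by
    intro y₀ y hy x hx
    obtain ⟨hyW, hyV⟩ := hΩspec y₀ y hy
    set H : K → K := fun z => if h : ∃ x' ∈ φ y₀, z ∈ V y₀ x' then h.choose else z with hH
    have hHspec : ∀ x' ∈ φ y₀, ∀ z ∈ V y₀ x', H z = x' := by
      intro x' hx' z hz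
      have hex : ∃ a ∈ φ y₀, z ∈ V y₀ a := ⟨x', hx', hz⟩
      rw [hH]
      simp only [dif_pos hex]
      by_contra hne
      exact absurd rfl
        ((hV2 y₀ _ hex.choose_spec.1 x' hx' hne).ne_of_mem hex.choose_spec.2 hz)
    have himg : (φ y).image H = φ y₀ := by
      apply Finset.Subset.antisymm
      · intro a ha
        obtain ⟨z, hz, rfl⟩ := Finset.mem_image.1 ha
        obtain ⟨x', hx', hzx'⟩ := mem_iUnion₂.1 (hyW z hz)
        rw [hHspec x' hx' z hzx']
        exact hx'
      · intro a ha
        obtain ⟨z, hz, hzV⟩ := hyV a ha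
        exact Finset.mem_image.2 ⟨z, hz, hHspec a ha z hzV⟩
    have hinj : Set.InjOn H (φ y) :=
      Finset.injOn_of_card_image_eq (by rw [himg, hcard, hcard])
    obtain ⟨z, hz, hzV⟩ := hyV x hx
    refine ⟨z, ⟨hz, hzV⟩, ?_⟩
    rintro z' ⟨hz', hz'V⟩
    apply hinj hz' hz
    rw [hHspec x hx z hzV, hHspec x hx z' hz'V]
  set sel : L → K → L → K :=
    (fun y₀ x y => if h : ∃ z, z ∈ φ y ∧ z ∈ V y₀ x then h.choose else x) with hseldef
  have hsel : ∀ y₀ x, x ∈ φ y₀ → ∀ y ∈ Ω y₀,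
      (sel y₀ x y ∈ φ y ∧ sel y₀ x y ∈ V y₀ x) ∧
        ∀ z, z ∈ φ y → z ∈ V y₀ x → z = sel y₀ x y := by
    intro y₀ x hx y hy
    obtain ⟨z, hz, huniq⟩ := hkey y₀ y hy x hx
    have hex : ∃ z, z ∈ φ y ∧ z ∈ V y₀ x := ⟨z, hz⟩
    constructor
    · rw [hseldef]; simp only [dif_pos hex]; exact hex.choose_spec
    · intro z' h1' h2'
      rw [hseldef]; simp only [dif_pos hex]
      exact (huniq z' ⟨h1', h2'⟩).trans (huniq _ hex.choose_spec).symm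
  have hselc : ∀ y₀ x, x ∈ φ y₀ → ContinuousOn (sel y₀ x) (Ω y₀) := by
    intro y₀ x hx
    rw [continuousOn_iff]
    intro y hy U hU hmemU
    refine ⟨{y' | ∃ z ∈ φ y', z ∈ U ∩ V y₀ x},
      hlsc _ (hU.inter (hV1 y₀ x hx).1),
      ⟨sel y₀ x y, ((hsel y₀ x hx y hy).1).1, hmemU, ((hsel y₀ x hx y hy).1).2⟩, ?_⟩
    rintro y' ⟨⟨z, hz, hzU, hzV⟩, hy'⟩
    simp only [mem_preimage]
    rw [← (hsel y₀ x hx y' hy').2 z hz hzV]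
    exact hzU
  obtain ⟨T, hT⟩ := isCompact_univ.elim_finite_subcover Ω hΩopen
    (fun y _ => mem_iUnion.2 ⟨y, hΩmem y⟩)
  obtain ⟨v, hvcov, hvopen, hvcl⟩ :=
    exists_subset_iUnion_closure_subset (isClosed_univ (X := L))
      (u := fun i : ↥T => Ω (i : L)) (fun i => hΩopen _) (fun x _ => Set.toFinite _)
      (by
        intro y _
        obtain ⟨i, hiT, hyi⟩ := mem_iUnion₂.1 (hT (mem_univ y))
        exact mem_iUnion.2 ⟨⟨i, hiT⟩, hyi⟩)
  set C : ↥T → Set L := fun i => closure (v i) with hCdef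
  have hCcomp : ∀ i, IsCompact (C i) := fun i => isClosed_closure.isCompact
  have hCΩ : ∀ i, C i ⊆ Ω (i : L) := hvcl
  let J := Σ i : ↥T, {x : K // x ∈ φ (i : L)}
  haveI : ∀ j : J, CompactSpace (C j.1) := fun j => isCompact_iff_compactSpace.1 (hCcomp j.1)
  have hmemK0 : ∀ (y : L) (z : K), z ∈ φ y → z ∈ (⋃ y : L, ((φ y : Finset K) : Set K)) :=
    fun y z hz => mem_iUnion.2 ⟨y, Finset.mem_coe.2 hz⟩
  let F : (Σ j : J, ↥(C j.1)) → ↥(⋃ y : L, ((φ y : Finset K) : Set K)) :=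
    fun z => ⟨sel (z.1.1 : L) (z.1.2 : K) (z.2 : L),
      hmemK0 _ _ ((hsel (z.1.1 : L) (z.1.2 : K) z.1.2.2 (z.2 : L) (hCΩ z.1.1 z.2.2)).1).1⟩
  have hFc : Continuous F := by
    apply continuous_sigma
    intro j
    exact Continuous.subtype_mk (((hselc (j.1 : L) (j.2 : K) j.2.2).mono (hCΩ j.1)).restrict) _
  have hFs : Function.Surjective F := by
    rintro ⟨x, hx⟩
    obtain ⟨y, hyx⟩ := mem_iUnion.1 hx
    obtain ⟨i, hyv⟩ := mem_iUnion.1 (hvcov (mem_univ y))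
    have hyC : y ∈ C i := subset_closure hyv
    have hyΩ : y ∈ Ω (i : L) := hCΩ i hyC
    have hxφ : x ∈ φ y := Finset.mem_coe.1 hyx
    obtain ⟨x₀, hx₀, hxV⟩ := mem_iUnion₂.1 ((hΩspec _ y hyΩ).1 x hxφ)
    refine ⟨⟨⟨i, ⟨x₀, hx₀⟩⟩, ⟨y, hyC⟩⟩, ?_⟩
    apply Subtype.ext
    exact ((hsel (i : L) x₀ hx₀ y hyΩ).2 x hxφ hxV).symm
  exact aux_metrizable F hFc hFs
end

section
/- Let K and L be compact Hausdorff spaces such that L contains a homeomorphic copy of the Cantor space 2^ω, and suppose there exists a continuous linear surjection T : C_p(K) → C_p(L), where C_p denotes the topology of pointwise convergence. Then K also contains a homeomorphic copy of 2^ω. -/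
/-!
Each functional `g ↦ T g y` is continuous on `C_p(K)`, hence a finite combination
`∑ μ y x • δₓ` of point evaluations. The support map `y ↦ supp (μ y)` is lower hemicontinuous,
so its cardinality is lower semicontinuous, and since `T` is surjective the functionals are
linearly independent: only finitely many `y` have their support inside a given finite set.
By Baire category the cardinality is constant on a copy of the Cantor set in `L`; there the
support points move along finitely many local continuous selections. As a finite set supports
only finitely many of these uncountably many functionals, the union of the supports is
uncountable, so some selection has uncountable image: a continuous image of a compact metrizable
space in `K`, hence compact metrizable, and therefore containing a Cantor set.
-/

def CpTopology (K : Type*) [TopologicalSpace K] : TopologicalSpace C(K, ℝ) :=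
  TopologicalSpace.induced (fun g : C(K, ℝ) => (g : K → ℝ)) Pi.topologicalSpace

open Set Function Topology TopologicalSpace

section PointEvaluation

variable {K : Type*} [TopologicalSpace K]

def pointEval (x : K) : Module.Dual ℝ C(K, ℝ) :=
  (ContinuousMap.evalCLM ℝ x : C(K, ℝ) →L[ℝ] ℝ)

@[simp]
theorem pointEval_apply (x : K) (g : C(K, ℝ)) : pointEval x g = g x := rfl

theorem cpTopology_eq_iInf_induced :
    CpTopology K = ⨅ x : K, induced (pointEval x) inferInstance := by
  simp only [CpTopology, Pi.topologicalSpace, induced_iInf, induced_compose]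
  rfl

theorem mem_span_pointEval_iff_continuous (φ : Module.Dual ℝ C(K, ℝ)) :
    φ ∈ Submodule.span ℝ (range pointEval) ↔ Continuous[CpTopology K, _] φ := by
  rw [LinearMap.mem_span_iff_continuous, ← cpTopology_eq_iInf_induced]

theorem exists_continuousMap_eq_one_eqOn_zero [CompletelyRegularSpace K] {A : Set K}
    (hA : IsClosed A) {x : K} (hx : x ∉ A) : ∃ f : C(K, ℝ), f x = 1 ∧ EqOn f 0 A := by
  obtain ⟨f, hf, hfx, hfA⟩ := CompletelyRegularSpace.completely_regular x A hA hx
  exact ⟨⟨fun y => 1 - f y, by fun_prop⟩, by simp [hfx], fun y hy => by simp [hfA hy]⟩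

theorem linearIndependent_pointEval [T35Space K] : LinearIndependent ℝ (pointEval (K := K)) := by
  classical
  rw [linearIndependent_iff']
  intro s c hsum x hx
  obtain ⟨f, hfx, hf0⟩ := exists_continuousMap_eq_one_eqOn_zero (x := x)
    (s.erase x).finite_toSet.isClosed (by simp)
  have := LinearMap.congr_fun hsum f
  simp only [LinearMap.sum_apply, LinearMap.smul_apply, pointEval_apply, smul_eq_mul,
    LinearMap.zero_apply] at this
  rwa [Finset.sum_eq_single_of_mem x hx fun y hy hyx => by
    simp [hf0 (Finset.mem_coe.2 (Finset.mem_erase.2 ⟨hyx, hy⟩))], hfx, mul_one] at this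

end PointEvaluation

section Representation

variable {K L : Type*} [TopologicalSpace K] [TopologicalSpace L]

theorem exists_finsupp_apply_eq_sum {T : C(K, ℝ) →ₗ[ℝ] C(L, ℝ)}
    (hT : Continuous[CpTopology K, CpTopology L] T) :
    ∃ μ : L → K →₀ ℝ, ∀ g y, T g y = (μ y).sum fun x c => c * g x := by
  have hmem (y : L) : T.dualMap (pointEval y) ∈ Submodule.span ℝ (range pointEval) := by
    let := CpTopology K
    let := CpTopology L
    rw [mem_span_pointEval_iff_continuous]
    exact ((mem_span_pointEval_iff_continuous _).1 (Submodule.subset_span ⟨y, rfl⟩)).comp hT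
  choose μ hμ using fun y => Finsupp.mem_span_range_iff_exists_finsupp.1 (hmem y)
  refine ⟨μ, fun g y => ?_⟩
  simpa [Finsupp.sum] using (LinearMap.congr_fun (hμ y) g).symm

variable {T : C(K, ℝ) →ₗ[ℝ] C(L, ℝ)} {μ : L → K →₀ ℝ}

theorem lowerHemicontinuous_support [T35Space K]
    (hμ : ∀ g y, T g y = (μ y).sum fun x c => c * g x) :
    LowerHemicontinuous fun y => ((μ y).support : Set K) := by
  classical
  refine fun y => lowerHemicontinuousAt_iff.2 ?_
  rintro U hU ⟨x, hx, hxU⟩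
  -- `T f y = μ y x ≠ 0`, while `T f y' = 0` whenever the support of `μ y'` misses `U`
  obtain ⟨f, hfx, hf0⟩ := exists_continuousMap_eq_one_eqOn_zero (x := x)
    (hU.isClosed_compl.union ((μ y).support.erase x).finite_toSet.isClosed) (by simp [hxU])
  have hTf : T f y ≠ 0 := by
    rw [hμ, Finsupp.sum, Finset.sum_eq_single_of_mem x hx fun x' hx' hne => by
      simp [hf0 (Or.inr (Finset.mem_coe.2 (Finset.mem_erase.2 ⟨hne, hx'⟩)))], hfx, mul_one]
    exact Finsupp.mem_support_iff.1 hx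
  filter_upwards [(T f).continuous.continuousAt.eventually_ne hTf] with y' hy'
  by_contra hempty
  refine hy' ?_
  rw [hμ, Finsupp.sum]
  refine Finset.sum_eq_zero fun x' hx' => ?_
  have : x' ∉ U := fun h => hempty ⟨x', hx', h⟩
  simp [hf0 (Or.inl this)]

theorem finite_setOf_support_subset [T35Space L] (hT : Surjective T)
    (hμ : ∀ g y, T g y = (μ y).sum fun x c => c * g x) (G : Finset K) :
    {y | (μ y).support ⊆ G}.Finite := by
  have hli : LinearIndependent ℝ fun y : {y | (μ y).support ⊆ G} => T.dualMap (pointEval y.1) :=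
    (linearIndependent_pointEval.map' T.dualMap
      (LinearMap.ker_eq_bot.2 (LinearMap.dualMap_injective_of_surjective hT))).comp _
      Subtype.val_injective
  have : Finite {y | (μ y).support ⊆ G} := by
    refine hli.finite_of_le_span_finite _ (pointEval '' (G : Set K)) ?_
    rintro _ ⟨⟨y, hy⟩, rfl⟩
    have : T.dualMap (pointEval y) = (μ y).sum fun x c => c • pointEval x := by
      ext g
      simp [hμ, Finsupp.sum]
    show T.dualMap (pointEval y) ∈ _
    rw [this]
    exact Submodule.finsuppSum_mem _ _ _ _ fun x hx =>
      Submodule.smul_mem _ _ (Submodule.subset_span ⟨x, hy (Finsupp.mem_support_iff.2 hx), rfl⟩)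
  exact Set.toFinite _

end Representation

namespace Finset

variable {K : Type*} {S T : Finset K} {U : K → Set K}

theorem card_le_card_of_forall_inter_nonempty (hU : (S : Set K).PairwiseDisjoint U)
    (h : ∀ x ∈ S, ((T : Set K) ∩ U x).Nonempty) : S.card ≤ T.card := by
  choose! p hpT hpU using h
  exact card_le_card_of_injOn p hpT fun x hx x' hx' hpx =>
    hU.elim_set hx hx' (p x) (hpU x hx) (hpx ▸ hpU x' hx')

theorem exists_image_eq_of_card_le [DecidableEq K] (hU : (S : Set K).PairwiseDisjoint U)
    (h : ∀ x ∈ S, ((T : Set K) ∩ U x).Nonempty) (hcard : T.card ≤ S.card) :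
    ∃ p : K → K, (∀ x ∈ S, p x ∈ U x) ∧ S.image p = T := by
  choose! p hpT hpU using h
  have hp : InjOn p S := fun x hx x' hx' hpx =>
    hU.elim_set hx hx' (p x) (hpU x hx) (hpx ▸ hpU x' hx')
  exact ⟨p, hpU, eq_of_subset_of_card_le (image_subset_iff.2 hpT) (by rwa [card_image_of_injOn hp])⟩

end Finset

section Hemicontinuity

variable {X K : Type*} [TopologicalSpace X] [TopologicalSpace K]

theorem LowerHemicontinuous.eventually_inter_nonempty {F : X → Set K}
    (hF : LowerHemicontinuous F) {x : X} {U : Set K} (hU : IsOpen U) (hxU : (F x ∩ U).Nonempty) :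
    ∀ᶠ x' in 𝓝 x, (F x' ∩ U).Nonempty :=
  lowerHemicontinuousAt_iff.1 (hF x) U hU hxU

theorem LowerHemicontinuous.eventually_forall_inter_nonempty {F : X → Finset K}
    (hF : LowerHemicontinuous fun σ => (F σ : Set K)) {U : K → Set K}
    (hU : ∀ x, x ∈ U x ∧ IsOpen (U x)) (σ₀ : X) :
    ∀ᶠ σ in 𝓝 σ₀, ∀ x ∈ F σ₀, ((F σ : Set K) ∩ U x).Nonempty :=
  (F σ₀).eventually_all.2 fun x hx => hF.eventually_inter_nonempty (hU x).2 ⟨x, hx, (hU x).1⟩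

theorem LowerHemicontinuous.eventually_card_le [T2Space K] {F : X → Finset K}
    (hF : LowerHemicontinuous fun σ => (F σ : Set K)) (σ₀ : X) :
    ∀ᶠ σ in 𝓝 σ₀, (F σ₀).card ≤ (F σ).card := by
  obtain ⟨U, hU, hUdisj⟩ := (F σ₀).finite_toSet.t2_separation
  filter_upwards [hF.eventually_forall_inter_nonempty hU σ₀] with σ hσ
  exact Finset.card_le_card_of_forall_inter_nonempty hUdisj hσ

theorem LowerHemicontinuous.exists_continuousOn_selection [T2Space K] {F : X → Finset K}
    (hF : LowerHemicontinuous fun σ => (F σ : Set K)) {σ₀ : X}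
    (hcard : ∀ᶠ σ in 𝓝 σ₀, (F σ).card = (F σ₀).card) :
    ∃ N ∈ 𝓝 σ₀, ∃ s : K → X → K, (∀ x ∈ F σ₀, ContinuousOn (s x) N) ∧
      ∀ σ ∈ N, ∀ y ∈ F σ, ∃ x ∈ F σ₀, s x σ = y := by
  classical
  obtain ⟨U, hU, hUdisj⟩ := (F σ₀).finite_toSet.t2_separation
  set N := {σ | (F σ).card = (F σ₀).card ∧ ∀ x ∈ F σ₀, ((F σ : Set K) ∩ U x).Nonempty}
  have hN : N ∈ 𝓝 σ₀ := hcard.and (hF.eventually_forall_inter_nonempty hU σ₀)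
  -- on `N`, each `U x` with `x ∈ F σ₀` contains exactly one point of `F σ`, and these exhaust `F σ`
  have hcells (σ : X) (hσ : σ ∈ N) : ∃ p : K → K, (∀ x ∈ F σ₀, p x ∈ U x) ∧ (F σ₀).image p = F σ :=
    Finset.exists_image_eq_of_card_le hUdisj hσ.2 hσ.1.le
  let s (x : K) (σ : X) : K := if h : ((F σ : Set K) ∩ U x).Nonempty then h.some else x
  have hs (σ : X) (hσ : σ ∈ N) (x : K) (hx : x ∈ F σ₀) : s x σ ∈ F σ ∧ s x σ ∈ U x := by
    simp only [s, dif_pos (hσ.2 x hx)]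
    exact (hσ.2 x hx).some_mem
  have huniq (σ : X) (hσ : σ ∈ N) (x : K) (hx : x ∈ F σ₀) (y : K) (hy : y ∈ F σ) (hyU : y ∈ U x) :
      s x σ = y := by
    obtain ⟨p, hpU, hp⟩ := hcells σ hσ
    have hcell {z : K} (hz : z ∈ F σ) (hzU : z ∈ U x) : z = p x := by
      obtain ⟨x', hx', rfl⟩ := Finset.mem_image.1 (hp ▸ hz)
      rw [hUdisj.elim_set hx' hx _ (hpU x' hx') hzU]
    rw [hcell (hs σ hσ x hx).1 (hs σ hσ x hx).2, hcell hy hyU]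
  refine ⟨N, hN, s, fun x hx σ hσ => ?_, fun σ hσ y hy => ?_⟩
  · refine tendsto_nhds.2 fun O hO hsO => ?_
    have hnear := hF.eventually_inter_nonempty ((hU x).2.inter hO)
      ⟨s x σ, (hs σ hσ x hx).1, (hs σ hσ x hx).2, hsO⟩
    filter_upwards [self_mem_nhdsWithin, nhdsWithin_le_nhds hnear] with τ hτ ⟨y, hy, hyU, hyO⟩
    rwa [mem_preimage, huniq τ hτ x hx y hy hyU]
  · obtain ⟨p, hpU, hp⟩ := hcells σ hσ
    obtain ⟨x, hx, rfl⟩ := Finset.mem_image.1 (hp ▸ hy)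
    exact ⟨x, hx, huniq σ hσ x hx _ hy (hpU x hx)⟩

end Hemicontinuity

theorem exists_eventually_eq_of_forall_eventually_le {X : Type*} [TopologicalSpace X]
    [BaireSpace X] [Nonempty X] (f : X → ℕ) (hf : ∀ x, ∀ᶠ y in 𝓝 x, f x ≤ f y) :
    ∃ x, ∀ᶠ y in 𝓝 x, f y = f x := by
  have hclosed (k : ℕ) : IsClosed {x | f x ≤ k} := by
    refine isOpen_compl_iff.1 (isOpen_iff_mem_nhds.2 fun x hx => ?_)
    filter_upwards [hf x] with y hy
    exact fun hyk => hx (hy.trans hyk)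
  obtain ⟨k, hk⟩ := nonempty_interior_of_iUnion_of_closed hclosed
    (iUnion_eq_univ_iff.2 fun x => ⟨f x, le_refl (f x)⟩)
  set I := interior {x | f x ≤ k}
  have hbdd : BddAbove (f '' I) :=
    ⟨k, by rintro _ ⟨y, hy, rfl⟩; exact (interior_subset hy : y ∈ {x | f x ≤ k})⟩
  obtain ⟨x, hx, hfx⟩ := Nat.sSup_mem (hk.image f) hbdd
  refine ⟨x, ?_⟩
  filter_upwards [hf x, isOpen_interior.mem_nhds hx] with y hy hyI
  exact le_antisymm (hfx ▸ le_csSup hbdd ⟨y, hyI, rfl⟩) hy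

instance : Uncountable (ℕ → Bool) := by
  rw [← Cardinal.aleph0_lt_mk_iff]
  simpa using Cardinal.aleph0_lt_continuum

theorem exists_nat_bool_injection_of_mem_nhds {s : Set (ℕ → Bool)} {σ : ℕ → Bool}
    (hs : s ∈ 𝓝 σ) : ∃ e : (ℕ → Bool) → (ℕ → Bool), range e ⊆ s ∧ Continuous e ∧ Injective e := by
  obtain ⟨_, ⟨τ, n, rfl⟩, hστ, hsub⟩ := (PiNat.isTopologicalBasis_cylinders _).mem_nhds_iff.1 hs
  refine ⟨fun ρ i => if i < n then σ i else ρ (i - n), ?_, ?_, fun ρ ρ' h => funext fun i => ?_⟩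
  · rintro _ ⟨ρ, rfl⟩
    exact hsub fun i hi => (if_pos hi).trans (hστ i hi)
  · refine continuous_pi fun i => ?_
    split_ifs
    exacts [continuous_const, continuous_apply _]
  · simpa using congrFun h (i + n)

theorem secondCountableTopology_of_surjective {X Y : Type*} [TopologicalSpace X] [CompactSpace X]
    [SecondCountableTopology X] [TopologicalSpace Y] [T2Space Y] {f : X → Y} (hf : Continuous f)
    (hsurj : Surjective f) : SecondCountableTopology Y := by
  let 𝒰 : Set (Set X) := sUnion '' {t | t.Finite ∧ t ⊆ countableBasis X}
  refine IsTopologicalBasis.secondCountableTopology (b := (fun U => (f '' Uᶜ)ᶜ) '' 𝒰)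
    (isTopologicalBasis_of_isOpen_of_nhds ?_ fun y O hy hO => ?_)
    ((countable_ofPred_finite_subset (countable_countableBasis X)).image _ |>.image _)
  · rintro _ ⟨_, ⟨t, ⟨-, ht⟩, rfl⟩, rfl⟩
    exact ((isOpen_sUnion fun u hu => isOpen_of_mem_countableBasis (ht hu)).isClosed_compl
      |>.isCompact.image hf).isClosed.isOpen_compl
  -- the compact fibre over `y` is covered by finitely many basic sets inside `f ⁻¹' O`
  obtain ⟨t, htB, htfin, hcover⟩ := (isClosed_singleton.preimage hf).isCompact
    |>.elim_finite_subcover_image (b := {u ∈ countableBasis X | u ⊆ f ⁻¹' O}) (c := id)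
      (fun u hu => isOpen_of_mem_countableBasis hu.1) fun x hx => by
        obtain ⟨u, hu, hxu, huO⟩ := (isBasis_countableBasis X).exists_subset_of_mem_open
          (by rwa [mem_preimage, show f x = y from hx]) (hO.preimage hf)
        exact mem_biUnion ⟨hu, huO⟩ hxu
  refine ⟨_, ⟨⋃₀ t, ⟨t, ⟨htfin, fun u hu => (htB hu).1⟩, rfl⟩, rfl⟩, ?_, ?_⟩
  · rintro ⟨x, hx, hxy⟩
    exact hx (by simpa using hcover hxy)
  · intro y' hy'
    obtain ⟨x, rfl⟩ := hsurj y'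
    obtain ⟨u, hu, hxu⟩ : x ∈ ⋃₀ t := not_not.1 fun hx => hy' ⟨x, hx, rfl⟩
    exact (htB hu).2 hxu

theorem exists_nat_bool_injection_of_not_countable_range {X Y : Type*} [TopologicalSpace X]
    [CompactSpace X] [SecondCountableTopology X] [TopologicalSpace Y] [T2Space Y] {f : X → Y}
    (hf : Continuous f) (hrange : ¬(range f).Countable) :
    ∃ e : (ℕ → Bool) → Y, Continuous e ∧ Injective e := by
  have := isCompact_iff_compactSpace.1 (isCompact_range hf)
  have := secondCountableTopology_of_surjective hf.rangeFactorization rangeFactorization_surjective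
  let := metrizableSpaceMetric (range f)
  obtain ⟨e, -, he, he_inj⟩ := isClosed_univ.exists_nat_bool_injection_of_not_countable
    (α := range f)
    (by rwa [← countable_coe_iff, (Equiv.Set.univ _).countable_iff, countable_coe_iff])
  exact ⟨Subtype.val ∘ e, continuous_subtype_val.comp he, Subtype.val_injective.comp he_inj⟩

theorem not_countable_iUnion_of_finite_setOf_subset {X K : Type*} [Uncountable X]
    {F : X → Finset K} (hF : ∀ G, {σ | F σ ⊆ G}.Finite) : ¬(⋃ σ, (F σ : Set K)).Countable := by
  intro h
  have hsub : (univ : Set X) ⊆ ⋃ G ∈ {G : Finset K | (G : Set K) ⊆ ⋃ σ, F σ}, {σ | F σ ⊆ G} :=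
    fun σ _ => mem_biUnion (subset_iUnion (fun σ => (F σ : Set K)) σ) (Finset.Subset.refl (F σ))
  have hG : {G : Finset K | (G : Set K) ⊆ ⋃ σ, F σ}.Countable :=
    ((countable_ofPred_finite_subset h).preimage Finset.coe_injective).mono
      fun G hG => show (G : Set K).Finite ∧ _ from ⟨G.finite_toSet, hG⟩
  exact not_countable_univ ((hG.biUnion fun G _ => (hF G).countable).mono hsub)

theorem exists_nat_bool_injection_of_lowerHemicontinuous {X K : Type*} [TopologicalSpace X]
    [LocallyCompactSpace X] [SecondCountableTopology X] [Uncountable X] [TopologicalSpace K]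
    [T2Space K] {F : X → Finset K} (hF : LowerHemicontinuous fun σ => (F σ : Set K))
    (hcard : ∀ σ τ, (F σ).card = (F τ).card) (hfin : ∀ G, {σ | F σ ⊆ G}.Finite) :
    ∃ e : (ℕ → Bool) → K, Continuous e ∧ Injective e := by
  choose N hN s hs hcover using fun σ =>
    hF.exists_continuousOn_selection (σ₀ := σ) (.of_forall fun τ => hcard τ σ)
  choose V hV hVN hVc using fun σ => local_compact_nhds (hN σ)
  obtain ⟨t, htc, ht⟩ := TopologicalSpace.countable_cover_nhds hV
  have hsub : (⋃ σ, (F σ : Set K)) ⊆ ⋃ σ ∈ t, ⋃ x ∈ F σ, s σ x '' V σ := by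
    rintro y ⟨_, ⟨τ, rfl⟩, hy⟩
    obtain ⟨σ, hσ, hτ⟩ := mem_iUnion₂.1 (ht.symm ▸ mem_univ τ)
    obtain ⟨x, hx, rfl⟩ := hcover σ τ (hVN σ hτ) y hy
    exact mem_biUnion hσ (mem_biUnion hx (mem_image_of_mem _ hτ))
  obtain ⟨σ, x, hx, hunc⟩ : ∃ σ x, x ∈ F σ ∧ ¬(s σ x '' V σ).Countable := by
    by_contra! h
    exact not_countable_iUnion_of_finite_setOf_subset hfin <|
      (htc.biUnion fun σ _ => (F σ).countable_toSet.biUnion fun x hx => h σ x hx).mono hsub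
  have := isCompact_iff_compactSpace.1 (hVc σ)
  exact exists_nat_bool_injection_of_not_countable_range ((hs σ x hx).mono (hVN σ)).domRestrict
    (by rwa [range_domRestrict])

/-- (Marciszewski) If `L` contains a copy of the Cantor space `2^ω` and there is a
continuous linear surjection `T : C_p(K) → C_p(L)`, then `K` contains a copy of
`2^ω` as well. (A continuous injection of the compact space `2^ω` into a Hausdorff
space is automatically a homeomorphic embedding.) -/
theorem stmt17 {K L : Type*}
    [TopologicalSpace K] [CompactSpace K] [T2Space K]
    [TopologicalSpace L] [CompactSpace L] [T2Space L]
    (hCantor : ∃ e : (ℕ → Bool) → L, Continuous e ∧ Function.Injective e)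
    (T : C(K, ℝ) →ₗ[ℝ] C(L, ℝ))
    (hT : @Continuous _ _ (CpTopology K) (CpTopology L) T)
    (hsurj : Function.Surjective T) :
    ∃ e : (ℕ → Bool) → K, Continuous e ∧ Function.Injective e := by
  obtain ⟨μ, hμ⟩ := exists_finsupp_apply_eq_sum hT
  obtain ⟨e, he, he_inj⟩ := hCantor
  set F : (ℕ → Bool) → Finset K := fun σ => (μ (e σ)).support
  have hF : LowerHemicontinuous fun σ => (F σ : Set K) := (lowerHemicontinuous_support hμ).comp he
  have hfin (G : Finset K) : {σ | F σ ⊆ G}.Finite :=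
    (finite_setOf_support_subset hsurj hμ G).preimage he_inj.injOn
  obtain ⟨σ₀, hσ₀⟩ := exists_eventually_eq_of_forall_eventually_le _ hF.eventually_card_le
  obtain ⟨c, hc_sub, hc, hc_inj⟩ := exists_nat_bool_injection_of_mem_nhds hσ₀
  exact exists_nat_bool_injection_of_lowerHemicontinuous (hF.comp hc)
    (fun σ τ => (hc_sub ⟨σ, rfl⟩).trans (hc_sub ⟨τ, rfl⟩).symm)
    fun G => (hfin G).preimage hc_inj.injOn
end

section
/- Let K and L be compact Hausdorff spaces and T : C_p(K) → C_p(L) a continuous linear surjection, with supp_T(y) denoting the finite support of the functional g ↦ (Tg)(y). If L is uncountable and supp_T takes values in [K]^{<ω}, then the union ⋃_{y∈L} supp_T(y) is uncountable. -/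
/-- Interpolation: a continuous function on a compact Hausdorff space can take
arbitrary prescribed values on a finite set. -/
lemma exists_cont_interp {L : Type*} [TopologicalSpace L] [CompactSpace L] [T2Space L]
    (t : Finset L) (w : L → ℝ) : ∃ h : C(L, ℝ), ∀ y ∈ t, h y = w y := by
  classical
  have key : ∀ i ∈ t, ∃ f : C(L, ℝ), f i = 1 ∧ ∀ j ∈ t.erase i, f j = 0 := by
    intro i hi
    obtain ⟨f, hf0, hf1, -⟩ := exists_continuous_zero_one_of_isClosed
      ((t.erase i).finite_toSet.isClosed) (isClosed_singleton (x := i))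
      (by simp [Set.disjoint_singleton_right])
    exact ⟨f, hf1 rfl, fun j hj => hf0 hj⟩
  choose f hf1 hf0 using key
  refine ⟨∑ i ∈ t.attach, w i.1 • f i.1 i.2, ?_⟩
  intro y hy
  simp only [ContinuousMap.coe_sum, ContinuousMap.coe_smul, Finset.sum_apply, Pi.smul_apply,
    smul_eq_mul]
  have step : ∀ i : {x // x ∈ t}, w i.1 * (f i.1 i.2) y
      = if i.1 = y then w y else 0 := by
    intro i
    by_cases h : i.1 = y
    · subst h; simp [hf1]
    · have : y ∈ t.erase i.1 := Finset.mem_erase.mpr ⟨fun hh => h hh.symm, hy⟩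
      simp [h, hf0 i.1 i.2 y this]
  rw [Finset.sum_congr rfl fun i _ => step i,
    Finset.sum_attach t (fun i => if i = y then w y else 0), Finset.sum_ite_eq' t y]
  simp [hy]

/-- Let `T : C_p(K) → C_p(L)` be a continuous linear surjection with finite support
map `supp_T : L → [K]^{<ω}` (so `(Tg)(y) = ∑_{x ∈ supp_T y} a_x g(x)` with all
coefficients nonzero). If `L` is uncountable, then `⋃_{y ∈ L} supp_T(y)` is
uncountable. -/
theorem stmt18 {K L : Type*}
    [TopologicalSpace K] [CompactSpace K] [T2Space K]
    [TopologicalSpace L] [CompactSpace L] [T2Space L]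
    (T : C(K, ℝ) →ₗ[ℝ] C(L, ℝ))
    (hT : @Continuous _ _ (CpTopology K) (CpTopology L) T)
    (hsurj : Function.Surjective T)
    (suppT : L → Finset K)
    (hsupp : ∀ y : L, ∃ a : K → ℝ, (∀ x ∈ suppT y, a x ≠ 0) ∧
      ∀ g : C(K, ℝ), T g y = ∑ x ∈ suppT y, a x * g x)
    (hL : ¬ (Set.univ : Set L).Countable) :
    ¬ (⋃ y : L, ((suppT y : Finset K) : Set K)).Countable := by
  classical
  intro hS
  choose a hane haeq using hsupp
  -- Key claim: for every finset F of K, the set of y with suppT y ⊆ F is finite.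
  have key : ∀ F : Finset K, {y : L | suppT y ⊆ F}.Finite := by
    intro F
    by_contra hinf
    replace hinf : {y : L | suppT y ⊆ F}.Infinite := hinf
    obtain ⟨t, hts, htc⟩ := hinf.exists_subset_card_eq (F.card + 1)
    -- Build a surjective linear map (↥F → ℝ) →ₗ[ℝ] (↥t → ℝ).
    let Ψ : ({x // x ∈ F} → ℝ) →ₗ[ℝ] ({y // y ∈ t} → ℝ) :=
      { toFun := fun v i => ∑ x ∈ F.attach,
          (if x.1 ∈ suppT i.1 then a i.1 x.1 else 0) * v x
        map_add' := by
          intro v₁ v₂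
          funext i
          simp [mul_add, Finset.sum_add_distrib]
        map_smul' := by
          intro c v
          funext i
          simp [Finset.mul_sum, mul_left_comm] }
    have hΨsurj : Function.Surjective Ψ := by
      intro w
      obtain ⟨h, hh⟩ := exists_cont_interp t
        (fun y => if hy : y ∈ t then w ⟨y, hy⟩ else 0)
      obtain ⟨g, hg⟩ := hsurj h
      refine ⟨fun x => g x.1, ?_⟩
      funext i
      have hsub : suppT i.1 ⊆ F := hts i.2
      have : ∑ x ∈ F.attach, (if x.1 ∈ suppT i.1 then a i.1 x.1 else 0) * g x.1
          = ∑ x ∈ F, (if x ∈ suppT i.1 then a i.1 x else 0) * g x :=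
        Finset.sum_attach F (fun x => (if x ∈ suppT i.1 then a i.1 x else 0) * g x)
      show ∑ x ∈ F.attach, (if x.1 ∈ suppT i.1 then a i.1 x.1 else 0) * g x.1 = w i
      rw [this, ← Finset.sum_subset hsub (by intro x _ hx; simp [hx])]
      have := haeq i.1 g
      rw [hg] at this
      have hval := hh i.1 i.2
      rw [dif_pos i.2] at hval
      calc ∑ x ∈ suppT i.1, (if x ∈ suppT i.1 then a i.1 x else 0) * g x
          = ∑ x ∈ suppT i.1, a i.1 x * g x := by
            refine Finset.sum_congr rfl fun x hx => by simp [hx]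
        _ = h i.1 := this.symm
        _ = w i := by rw [hval]
    -- Rank comparison gives a contradiction.
    have hr : Module.finrank ℝ ({y // y ∈ t} → ℝ) ≤ Module.finrank ℝ ({x // x ∈ F} → ℝ) := by
      have : LinearMap.range Ψ = ⊤ := LinearMap.range_eq_top.mpr hΨsurj
      have h1 := Ψ.finrank_range_le
      rwa [this, finrank_top] at h1
    rw [Module.finrank_fintype_fun_eq_card, Module.finrank_fintype_fun_eq_card,
      Fintype.card_coe, Fintype.card_coe, htc] at hr
    omega
  -- Countability argument.
  set S := ⋃ y : L, ((suppT y : Finset K) : Set K) with hSdef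
  have hA : {F : Finset K | (F : Set K) ⊆ S}.Countable := by
    have h1 : {F : Finset K | (F : Set K) ⊆ S}
        ⊆ (fun F : Finset K => (F : Set K)) ⁻¹' {u : Set K | u.Finite ∧ u ⊆ S} := by
      intro F hF
      exact ⟨F.finite_toSet, hF⟩
    exact ((Set.countable_setOf_finite_subset hS).preimage Finset.coe_injective).mono h1
  have hcover : (Set.univ : Set L) ⊆
      ⋃ F ∈ {F : Finset K | (F : Set K) ⊆ S}, {y : L | suppT y = F} := by
    intro y _
    refine Set.mem_biUnion ?_ rfl
    intro x hx
    exact Set.mem_iUnion.mpr ⟨y, hx⟩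
  exact hL ((hA.biUnion fun F _ => ((key F).subset (fun y hy => le_of_eq hy)).countable).mono
    hcover)
end
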